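/- arXiv:2005.13941 — 9 statements merged into one kernel-verified Lean document; each statement's English description precedes it below -/
import Mathlib

section
/- Let V be a real Banach space and let σ be a reversible conical geodesic bicombing on V (with the metric induced by the norm). Then σ(x,y,t) = (1−t)·x + t·y for all x, y ∈ V and t ∈ [0,1]. In particular, V admits exactly one reversible conical geodesic bicombing. -/
/-- A geodesic bicombing on a metric space `X`: a map `σ : X × X × [0,1] → X` such that
`σ x y 0 = x`, `σ x y 1 = y` and `dist (σ x y s) (σ x y t) = |s - t| * dist x y`
for all `s, t ∈ [0,1]`. -/
def IsGeodesicBicombing {X : Type*} [MetricSpace X] (σ : X → X → ℝ → X) : Prop :=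
  (∀ x y : X, σ x y 0 = x) ∧ (∀ x y : X, σ x y 1 = y) ∧
    ∀ x y : X, ∀ s ∈ Set.Icc (0:ℝ) 1, ∀ t ∈ Set.Icc (0:ℝ) 1,
      dist (σ x y s) (σ x y t) = |s - t| * dist x y

/-- A bicombing is conical if
`dist (σ x y t) (σ x' y' t) ≤ (1 - t) * dist x x' + t * dist y y'` for all `t ∈ [0,1]`. -/
def IsConical {X : Type*} [MetricSpace X] (σ : X → X → ℝ → X) : Prop :=
  ∀ x y x' y' : X, ∀ t ∈ Set.Icc (0:ℝ) 1,
    dist (σ x y t) (σ x' y' t) ≤ (1 - t) * dist x x' + t * dist y y'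

/-- A bicombing is reversible if `σ x y t = σ y x (1 - t)` for all `t ∈ [0,1]`. -/
def IsReversible {X : Type*} [MetricSpace X] (σ : X → X → ℝ → X) : Prop :=
  ∀ x y : X, ∀ t ∈ Set.Icc (0:ℝ) 1, σ x y t = σ y x (1 - t)

/-!
Fix `0 < t < 1` and put `u = σ x y t - ((1 - t) • x + t • y)`, `w = y - x`. Comparing `σ x y t`
with `σ (x - z) y t` by conicality, and `σ (x - z) y t` with `x - z` along its own geodesic, gives
for every functional `f` of norm `≤ 1`
  `f u + t f w ≤ N_f w`, where `N_f v = ⨅ z, t ‖v + z‖ + (1 - t) ‖z‖ - f z`.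
`N_f` is sublinear and lies between `t f` and `t ‖·‖`, so a Hahn–Banach minorant `g ≤ N_f` with
`g w = N_f w` splits `f = t • (g / t) + (1 - t) • ((f - g) / (1 - t))` into functionals of norm
`≤ 1`. When `f` is an extreme point of the dual unit ball this forces `g = t • f`, hence
`N_f w = t f w` and `f u ≤ 0`. In the finite-dimensional span of `u` and `w` the (compact) face of
the dual ball norming `u` has an extreme point, and therefore `‖u‖ ≤ 0`.
-/

open Set Metric

open LinearPMap in
theorem exists_linearMap_le_sublinear_eq {E : Type*} [AddCommGroup E] [Module ℝ E]
    (N : E → ℝ) (N_hom : ∀ c : ℝ, 0 < c → ∀ x, N (c • x) = c * N x)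
    (N_add : ∀ x y, N (x + y) ≤ N x + N y) {w : E} (hw : w ≠ 0) :
    ∃ g : E →ₗ[ℝ] ℝ, g w = N w ∧ ∀ x, g x ≤ N x := by
  have N_zero : N 0 = 0 := by simpa [two_mul] using N_hom 2 two_pos 0
  let p : E →ₗ.[ℝ] ℝ := mkSpanSingleton w (N w) hw
  have le_on_span : ∀ v : p.domain, p v ≤ N v := by
    rintro ⟨_, hv⟩
    obtain ⟨c, rfl⟩ := Submodule.mem_span_singleton.mp hv
    rw [mkSpanSingleton'_apply, RingHom.id_apply, smul_eq_mul]
    change c * N w ≤ N (c • w)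
    rcases lt_trichotomy c 0 with hc | rfl | hc
    · have hsum : 0 ≤ N w + N (-w) := by simpa [N_zero] using N_add w (-w)
      rw [show c • w = (-c) • -w by simp, N_hom _ (neg_pos.2 hc)]
      nlinarith
    · simp [N_zero]
    · rw [N_hom c hc]
  obtain ⟨g, hg, hgN⟩ := exists_extension_of_le_sublinear p N N_hom N_add le_on_span
  exact ⟨g, (hg ⟨w, Submodule.mem_span_singleton_self w⟩).trans (mkSpanSingleton_apply ℝ ℝ hw _),
    hgN⟩

theorem eq_smul_of_mem_extremePoints_closedBall_one {E : Type*} [NormedAddCommGroup E]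
    [NormedSpace ℝ E] {x y : E} {t : ℝ} (hx : x ∈ (closedBall (0 : E) 1).extremePoints ℝ)
    (ht0 : 0 < t) (ht1 : t < 1) (hy : ‖y‖ ≤ t) (hxy : ‖x - y‖ ≤ 1 - t) : y = t • x := by
  have ht1' : 0 < 1 - t := sub_pos.2 ht1
  have mem_ball : ∀ {c : ℝ} {z : E}, 0 < c → ‖z‖ ≤ c → c⁻¹ • z ∈ closedBall (0 : E) 1 :=
    fun hc hz => by
      rw [mem_closedBall_zero_iff, norm_smul, norm_inv, Real.norm_of_nonneg hc.le]
      exact inv_mul_le_one_of_le₀ hz hc.le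
  have hseg : x ∈ openSegment ℝ (t⁻¹ • y) ((1 - t)⁻¹ • (x - y)) :=
    ⟨t, 1 - t, ht0, ht1', by ring, by
      rw [smul_inv_smul₀ ht0.ne', smul_inv_smul₀ ht1'.ne', add_sub_cancel]⟩
  have hy' : t⁻¹ • y = x :=
    ((mem_extremePoints.1 hx).2 _ (mem_ball ht0 hy) _ (mem_ball ht1' hxy) hseg).1
  rw [← hy', smul_inv_smul₀ ht0.ne']

namespace StrongDual

variable {V : Type*} [NormedAddCommGroup V] [NormedSpace ℝ V]

theorem apply_le_norm {f : StrongDual ℝ V} (hf : ‖f‖ ≤ 1) (v : V) : f v ≤ ‖v‖ :=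
  (le_abs_self _).trans (by simpa using f.le_of_opNorm_le hf v)

noncomputable def normInfConv (t : ℝ) (f : StrongDual ℝ V) (v : V) : ℝ :=
  ⨅ z : V, t * ‖v + z‖ + (1 - t) * ‖z‖ - f z

variable {t : ℝ} {f : StrongDual ℝ V}

section

variable (ht0 : 0 ≤ t) (ht1 : t ≤ 1) (hf : ‖f‖ ≤ 1)
include ht0 ht1 hf

theorem mul_apply_le_normInfConv_term (v z : V) :
    t * f v ≤ t * ‖v + z‖ + (1 - t) * ‖z‖ - f z := by
  have h₁ := mul_le_mul_of_nonneg_left (apply_le_norm hf (v + z)) ht0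
  have h₂ := mul_le_mul_of_nonneg_left (apply_le_norm hf z) (sub_nonneg.2 ht1)
  rw [map_add] at h₁
  linarith

theorem bddBelow_normInfConv_range (v : V) :
    BddBelow (range fun z : V => t * ‖v + z‖ + (1 - t) * ‖z‖ - f z) :=
  ⟨t * f v, forall_mem_range.2 (mul_apply_le_normInfConv_term ht0 ht1 hf v)⟩

theorem normInfConv_le (v z : V) : normInfConv t f v ≤ t * ‖v + z‖ + (1 - t) * ‖z‖ - f z :=
  ciInf_le (bddBelow_normInfConv_range ht0 ht1 hf v) z

theorem mul_apply_le_normInfConv (v : V) : t * f v ≤ normInfConv t f v :=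
  le_ciInf (mul_apply_le_normInfConv_term ht0 ht1 hf v)

theorem normInfConv_le_mul_norm (v : V) : normInfConv t f v ≤ t * ‖v‖ := by
  simpa using normInfConv_le ht0 ht1 hf v 0

theorem normInfConv_le_mul_norm_add_apply (v : V) :
    normInfConv t f v ≤ (1 - t) * ‖v‖ + f v := by
  simpa using normInfConv_le ht0 ht1 hf v (-v)

theorem normInfConv_add_le (v₁ v₂ : V) :
    normInfConv t f (v₁ + v₂) ≤ normInfConv t f v₁ + normInfConv t f v₂ := by
  rw [← sub_le_iff_le_add]
  refine le_ciInf fun z₁ => ?_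
  rw [sub_le_comm]
  refine le_ciInf fun z₂ => ?_
  have hle := normInfConv_le ht0 ht1 hf (v₁ + v₂) (z₁ + z₂)
  have hn₁ : ‖v₁ + v₂ + (z₁ + z₂)‖ ≤ ‖v₁ + z₁‖ + ‖v₂ + z₂‖ :=
    (norm_add_le _ _).trans_eq' (by abel_nf)
  have hn₂ := norm_add_le z₁ z₂
  rw [map_add] at hle
  linarith [mul_le_mul_of_nonneg_left hn₁ ht0, mul_le_mul_of_nonneg_left hn₂ (sub_nonneg.2 ht1)]

end

theorem normInfConv_smul {c : ℝ} (hc : 0 < c) (v : V) :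
    normInfConv t f (c • v) = c * normInfConv t f v := by
  have hsurj : Function.Surjective fun z : V => c • z := fun z =>
    ⟨c⁻¹ • z, smul_inv_smul₀ hc.ne' z⟩
  rw [normInfConv, normInfConv, Real.mul_iInf_of_nonneg hc.le, ← hsurj.iInf_comp]
  congr 1 with z
  simp only [← smul_add, norm_smul, map_smul, smul_eq_mul, Real.norm_of_nonneg hc.le]
  ring

theorem abs_le_mul_norm_of_le_normInfConv (ht0 : 0 ≤ t) (ht1 : t ≤ 1) (hf : ‖f‖ ≤ 1)
    {g : V →ₗ[ℝ] ℝ} (hg : ∀ v, g v ≤ normInfConv t f v) (v : V) : |g v| ≤ t * ‖v‖ := by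
  have hneg := (hg (-v)).trans (normInfConv_le_mul_norm ht0 ht1 hf (-v))
  rw [map_neg, norm_neg] at hneg
  exact abs_le.2 ⟨by linarith, (hg v).trans (normInfConv_le_mul_norm ht0 ht1 hf v)⟩

theorem abs_apply_sub_le_of_le_normInfConv (ht0 : 0 ≤ t) (ht1 : t ≤ 1) (hf : ‖f‖ ≤ 1)
    {g : V →ₗ[ℝ] ℝ} (hg : ∀ v, g v ≤ normInfConv t f v) (v : V) :
    |f v - g v| ≤ (1 - t) * ‖v‖ := by
  have hpos := (hg v).trans (normInfConv_le_mul_norm_add_apply ht0 ht1 hf v)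
  have hneg := (hg (-v)).trans (normInfConv_le_mul_norm_add_apply ht0 ht1 hf (-v))
  rw [map_neg, map_neg, norm_neg] at hneg
  exact abs_le.2 ⟨by linarith, by linarith⟩

theorem normInfConv_eq_of_mem_extremePoints (ht0 : 0 < t) (ht1 : t < 1)
    (hf : f ∈ (closedBall (0 : StrongDual ℝ V) 1).extremePoints ℝ) (w : V) :
    normInfConv t f w = t * f w := by
  have hf1 : ‖f‖ ≤ 1 := mem_closedBall_zero_iff.1 hf.1
  rcases eq_or_ne w 0 with rfl | hw
  · refine le_antisymm ?_ (mul_apply_le_normInfConv ht0.le ht1.le hf1 0)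
    simpa using normInfConv_le_mul_norm ht0.le ht1.le hf1 (0 : V)
  obtain ⟨g, hgw, hgN⟩ := exists_linearMap_le_sublinear_eq (normInfConv t f)
    (fun _ hc v => normInfConv_smul hc v) (normInfConv_add_le ht0.le ht1.le hf1) hw
  have hg := abs_le_mul_norm_of_le_normInfConv ht0.le ht1.le hf1 hgN
  have hfg := abs_apply_sub_le_of_le_normInfConv ht0.le ht1.le hf1 hgN
  set G : StrongDual ℝ V := g.mkContinuous t fun v => by simpa using hg v
  have hG : ‖G‖ ≤ t := g.mkContinuous_norm_le ht0.le _
  have hfG : ‖f - G‖ ≤ 1 - t := ContinuousLinearMap.opNorm_le_bound _ (sub_pos.2 ht1).le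
    fun v => by simpa [G] using hfg v
  rw [← hgw, ← smul_eq_mul, ← smul_apply,
    ← eq_smul_of_mem_extremePoints_closedBall_one hf ht0 ht1 hG hfG]
  rfl

theorem exists_mem_extremePoints_closedBall_apply_eq_norm [FiniteDimensional ℝ V] (u : V) :
    ∃ φ ∈ (closedBall (0 : StrongDual ℝ V) 1).extremePoints ℝ, φ u = ‖u‖ := by
  set B := closedBall (0 : StrongDual ℝ V) 1
  set L : StrongDual ℝ (StrongDual ℝ V) := ContinuousLinearMap.apply ℝ ℝ u
  have hexposed : IsExposed ℝ B (L.toExposed B) := ContinuousLinearMap.toExposed.isExposed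
  have apply_le : ∀ ψ ∈ B, ψ u ≤ ‖u‖ := fun ψ hψ => apply_le_norm (mem_closedBall_zero_iff.1 hψ) u
  obtain ⟨φ₀, hφ₀, hφ₀u⟩ := exists_dual_vector'' ℝ u
  have hφ₀B : φ₀ ∈ B := mem_closedBall_zero_iff.2 hφ₀
  have hφ₀L : φ₀ ∈ L.toExposed B := ⟨hφ₀B, fun ψ hψ => (apply_le ψ hψ).trans hφ₀u.ge⟩
  obtain ⟨φ, hφ⟩ := (hexposed.isCompact (isCompact_closedBall 0 1)).extremePoints_nonempty
    ⟨φ₀, hφ₀L⟩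
  refine ⟨φ, hexposed.isExtreme.extremePoints_subset_extremePoints hφ, ?_⟩
  exact (apply_le φ hφ.1.1).antisymm (hφ₀u.symm.trans_le (hφ.1.2 φ₀ hφ₀B))

theorem eq_zero_of_forall_add_mul_le_normInfConv (ht0 : 0 < t) (ht1 : t < 1) {u w : V}
    (h : ∀ f : StrongDual ℝ V, ‖f‖ ≤ 1 → f u + t * f w ≤ normInfConv t f w) : u = 0 := by
  set W := Submodule.span ℝ ({u, w} : Set V)
  have : FiniteDimensional ℝ W := FiniteDimensional.span_of_finite ℝ (toFinite _)
  have huW : u ∈ W := Submodule.subset_span (by simp)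
  have hwW : w ∈ W := Submodule.subset_span (by simp)
  suffices (⟨u, huW⟩ : W) = 0 by simpa using congrArg Subtype.val this
  obtain ⟨φ, hφ, hφu⟩ := exists_mem_extremePoints_closedBall_apply_eq_norm (⟨u, huW⟩ : W)
  obtain ⟨f, hfφ, hfφ_norm⟩ := exists_extension_norm_eq W φ
  have hf : ‖f‖ ≤ 1 := hfφ_norm ▸ mem_closedBall_zero_iff.1 hφ.1
  have hφuw : φ ⟨u, huW⟩ + t * φ ⟨w, hwW⟩ ≤ normInfConv t φ ⟨w, hwW⟩ := le_ciInf fun z => by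
    rw [← hfφ, ← hfφ, ← hfφ]
    exact (h f hf).trans (normInfConv_le ht0.le ht1.le hf w z)
  rw [normInfConv_eq_of_mem_extremePoints ht0 ht1 hφ, hφu] at hφuw
  exact norm_le_zero_iff.1 (by linarith)

end StrongDual

theorem IsGeodesicBicombing.dist_apply_left {X : Type*} [MetricSpace X] {σ : X → X → ℝ → X}
    (hσ : IsGeodesicBicombing σ) (x y : X) {t : ℝ} (ht : t ∈ Icc (0 : ℝ) 1) :
    dist (σ x y t) x = t * dist x y := by
  have h := hσ.2.2 x y 0 (left_mem_Icc.2 zero_le_one) t ht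
  rwa [hσ.1, abs_sub_comm, sub_zero, abs_of_nonneg ht.1, dist_comm] at h

theorem IsConical.apply_sub_add_mul_le_normInfConv {V : Type*} [NormedAddCommGroup V]
    [NormedSpace ℝ V] {σ : V → V → ℝ → V} (hcon : IsConical σ) (hgeo : IsGeodesicBicombing σ)
    {f : StrongDual ℝ V} (hf : ‖f‖ ≤ 1) (x y : V) {t : ℝ} (ht : t ∈ Icc (0 : ℝ) 1) :
    f (σ x y t - ((1 - t) • x + t • y)) + t * f (y - x) ≤ StrongDual.normInfConv t f (y - x) := by
  refine le_ciInf fun z => ?_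
  have hcone : dist (σ x y t) (σ (x - z) y t) ≤ (1 - t) * ‖z‖ := by
    simpa [dist_eq_norm] using hcon x y (x - z) y t ht
  have hgeod : dist (σ (x - z) y t) (x - z) = t * ‖y - x + z‖ := by
    rw [hgeo.dist_apply_left _ _ ht, dist_eq_norm, norm_sub_rev]
    abel_nf
  have h₁ := StrongDual.apply_le_norm hf (σ x y t - σ (x - z) y t)
  have h₂ := StrongDual.apply_le_norm hf (σ (x - z) y t - (x - z))
  rw [← dist_eq_norm] at h₁ h₂
  simp only [map_sub, map_add, map_smul, smul_eq_mul] at h₁ h₂ ⊢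
  linarith

theorem banach_reversible_conical_bicombing_eq_linear_general
    {V : Type*} [NormedAddCommGroup V] [NormedSpace ℝ V]
    (σ : V → V → ℝ → V) (hgeo : IsGeodesicBicombing σ) (hcon : IsConical σ) :
    ∀ x y : V, ∀ t ∈ Set.Icc (0:ℝ) 1, σ x y t = (1 - t) • x + t • y := by
  intro x y t ht
  rcases ht.1.eq_or_lt with rfl | ht0
  · simp [hgeo.1]
  rcases ht.2.eq_or_lt with rfl | ht1
  · simp [hgeo.2.1]
  exact sub_eq_zero.1 <| StrongDual.eq_zero_of_forall_add_mul_le_normInfConv ht0 ht1 fun _ hf =>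
    hcon.apply_sub_add_mul_le_normInfConv hgeo hf x y ht

/-- **A Banach space admits only one reversible conical geodesic bicombing**, namely the one
given by linear segments: every reversible conical geodesic bicombing `σ` on a real Banach
space satisfies `σ x y t = (1 - t) • x + t • y` for all `x, y` and `t ∈ [0,1]`. -/
theorem banach_reversible_conical_bicombing_eq_linear
    {V : Type*} [NormedAddCommGroup V] [NormedSpace ℝ V] [CompleteSpace V]
    (σ : V → V → ℝ → V) (hgeo : IsGeodesicBicombing σ) (hcon : IsConical σ)
    (hrev : IsReversible σ) :
    ∀ x y : V, ∀ t ∈ Set.Icc (0:ℝ) 1, σ x y t = (1 - t) • x + t • y :=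
  banach_reversible_conical_bicombing_eq_linear_general σ hgeo hcon
end

section
/- Let H = { (s,t) ∈ ℝ² : t ≥ 0 } be the closed upper half-plane equipped with the metric induced by the supremum norm ‖(s,t)‖_∞ = max(|s|,|t|) on ℝ². Then there exist two distinct reversible conical geodesic bicombings on H; in particular, H admits a reversible conical geodesic bicombing σ with σ((−1,0),(1,0),1/2) = (0,1), which differs from the conical bicombing given by linear segments (x,y,t) ↦ (1−t)·x + t·y. -/
/-- The closed upper half-plane in `ℝ²` with the supremum norm. (The product metric on
`ℝ × ℝ` in mathlib is exactly the supremum metric `dist p q = max |p₁ - q₁| |p₂ - q₂|`.) -/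
abbrev UpperHalfPlaneSup : Type := {p : ℝ × ℝ // 0 ≤ p.2}
/-! The tent bicombing `σ_c` moves linearly in the first coordinate; in the second it follows the
maximum of the linear interpolation and a tent `c · min t (1 - t) · d(x, y)` over the segment.
Both pieces are `d(x, y)`-Lipschitz in `t` for `c ≤ 1`, so `σ_c x y` is `d(x, y)`-Lipschitz, and a
Lipschitz path of that constant from `x` to `y` is automatically geodesic, since the triangle
inequality through any two of its points leaves no slack. The tent varies by
at most `d(x, x') + d(y, y')` weighted by `min t (1 - t)`, which gives conicality. For `c = 0` this is
the linear bicombing, while `σ_1` lifts the midpoint of `(-1, 0)` and `(1, 0)` to `(0, 1)`. -/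

open Set

theorem isGeodesicBicombing_of_dist_le {X : Type*} [MetricSpace X] {σ : X → X → ℝ → X}
    (h0 : ∀ x y, σ x y 0 = x) (h1 : ∀ x y, σ x y 1 = y)
    (hle : ∀ x y : X, ∀ s ∈ Icc (0 : ℝ) 1, ∀ t ∈ Icc (0 : ℝ) 1,
      dist (σ x y s) (σ x y t) ≤ |s - t| * dist x y) :
    IsGeodesicBicombing σ := by
  refine ⟨h0, h1, fun x y s hs t ht => ?_⟩
  wlog hst : s ≤ t generalizing s t
  · rw [dist_comm, abs_sub_comm]
    exact this t ht s hs (le_of_not_ge hst)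
  have hxs := hle x y 0 ⟨le_rfl, zero_le_one⟩ s hs
  have hst' := hle x y s hs t ht
  have hty := hle x y t ht 1 ⟨zero_le_one, le_rfl⟩
  rw [h0, zero_sub, abs_neg, abs_of_nonneg hs.1] at hxs
  rw [abs_of_nonpos (sub_nonpos.2 hst)] at hst' ⊢
  rw [h1, abs_of_nonpos (sub_nonpos.2 ht.2)] at hty
  linarith [dist_triangle4 x (σ x y s) (σ x y t) y]

theorem abs_lerp_sub_lerp (a b s t : ℝ) :
    |((1 - s) * a + s * b) - ((1 - t) * a + t * b)| = |s - t| * |a - b| := by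
  rw [abs_sub_comm a b, ← abs_mul]
  congr 1
  ring

theorem abs_lerp_sub_lerp_le {a b a' b' t : ℝ} (ht : t ∈ Icc (0 : ℝ) 1) :
    |((1 - t) * a + t * b) - ((1 - t) * a' + t * b')| ≤ (1 - t) * |a - a'| + t * |b - b'| := by
  have h1t : 0 ≤ 1 - t := by linarith [ht.2]
  calc |((1 - t) * a + t * b) - ((1 - t) * a' + t * b')|
      = |(1 - t) * (a - a') + t * (b - b')| := by ring_nf
    _ ≤ (1 - t) * |a - a'| + t * |b - b'| := by
      refine (abs_add_le _ _).trans_eq ?_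
      rw [abs_mul, abs_mul, abs_of_nonneg h1t, abs_of_nonneg ht.1]

namespace UpperHalfPlaneSup

theorem dist_eq (x y : UpperHalfPlaneSup) : dist x y = max |x.1.1 - y.1.1| |x.1.2 - y.1.2| := by
  rw [Subtype.dist_eq, Prod.dist_eq, Real.dist_eq, Real.dist_eq]

theorem abs_fst_sub_le_dist (x y : UpperHalfPlaneSup) : |x.1.1 - y.1.1| ≤ dist x y :=
  (dist_eq x y).symm ▸ le_max_left _ _

theorem abs_snd_sub_le_dist (x y : UpperHalfPlaneSup) : |x.1.2 - y.1.2| ≤ dist x y :=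
  (dist_eq x y).symm ▸ le_max_right _ _

/-- The outer `max … 0` only matters for `t ∉ [0, 1]`, where it keeps the point in the half-plane. -/
noncomputable def tentBicombing (c : ℝ) (x y : UpperHalfPlaneSup) (t : ℝ) : UpperHalfPlaneSup :=
  ⟨((1 - t) * x.1.1 + t * y.1.1,
    max (max ((1 - t) * x.1.2 + t * y.1.2) (c * min t (1 - t) * dist x y)) 0),
   le_max_right _ _⟩

variable {c : ℝ} (x y : UpperHalfPlaneSup)

theorem snd_tentBicombing {t : ℝ} (ht : t ∈ Icc (0 : ℝ) 1) :
    (tentBicombing c x y t).1.2 = max ((1 - t) * x.1.2 + t * y.1.2) (c * min t (1 - t) * dist x y) :=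
  max_eq_left <| le_max_of_le_left <| by nlinarith [x.2, y.2, ht.1, ht.2]

theorem tentBicombing_apply_zero : tentBicombing c x y 0 = x := by
  ext <;> simp [tentBicombing, x.2]

theorem tentBicombing_apply_one : tentBicombing c x y 1 = y := by
  ext <;> simp [tentBicombing, y.2]

theorem tentBicombing_symm (t : ℝ) : tentBicombing c x y t = tentBicombing c y x (1 - t) := by
  ext
  · simp only [tentBicombing]; ring
  · simp only [tentBicombing, dist_comm x y, min_comm t (1 - t), sub_sub_cancel]
    ring_nf

theorem dist_tentBicombing_le (hc0 : 0 ≤ c) (hc1 : c ≤ 1) {s t : ℝ}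
    (hs : s ∈ Icc (0 : ℝ) 1) (ht : t ∈ Icc (0 : ℝ) 1) :
    dist (tentBicombing c x y s) (tentBicombing c x y t) ≤ |s - t| * dist x y := by
  have h_tent : |min s (1 - s) - min t (1 - t)| ≤ |s - t| := by
    simpa [abs_sub_comm s t] using abs_min_sub_min_le_max s (1 - s) t (1 - t)
  rw [dist_eq, max_le_iff, snd_tentBicombing x y hs, snd_tentBicombing x y ht]
  refine ⟨?_, (abs_max_sub_max_le_max _ _ _ _).trans (max_le ?_ ?_)⟩
  · exact (abs_lerp_sub_lerp _ _ s t).trans_le <|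
      mul_le_mul_of_nonneg_left (abs_fst_sub_le_dist x y) (abs_nonneg _)
  · exact (abs_lerp_sub_lerp _ _ s t).trans_le <|
      mul_le_mul_of_nonneg_left (abs_snd_sub_le_dist x y) (abs_nonneg _)
  · calc |c * min s (1 - s) * dist x y - c * min t (1 - t) * dist x y|
        = c * |min s (1 - s) - min t (1 - t)| * dist x y := by
          rw [← sub_mul, ← mul_sub, abs_mul, abs_mul, abs_of_nonneg hc0, abs_dist]
      _ ≤ 1 * |s - t| * dist x y := by gcongr
      _ = |s - t| * dist x y := by rw [one_mul]

theorem dist_tentBicombing_tentBicombing_le (hc0 : 0 ≤ c) (hc1 : c ≤ 1) (x' y' : UpperHalfPlaneSup)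
    {t : ℝ} (ht : t ∈ Icc (0 : ℝ) 1) :
    dist (tentBicombing c x y t) (tentBicombing c x' y' t) ≤ (1 - t) * dist x x' + t * dist y y' := by
  have h1t : 0 ≤ 1 - t := by linarith [ht.2]
  rw [dist_eq, max_le_iff, snd_tentBicombing x y ht, snd_tentBicombing x' y' ht]
  refine ⟨?_, (abs_max_sub_max_le_max _ _ _ _).trans (max_le ?_ ?_)⟩
  · exact (abs_lerp_sub_lerp_le ht).trans <|
      add_le_add (mul_le_mul_of_nonneg_left (abs_fst_sub_le_dist x x') h1t)
        (mul_le_mul_of_nonneg_left (abs_fst_sub_le_dist y y') ht.1)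
  · exact (abs_lerp_sub_lerp_le ht).trans <|
      add_le_add (mul_le_mul_of_nonneg_left (abs_snd_sub_le_dist x x') h1t)
        (mul_le_mul_of_nonneg_left (abs_snd_sub_le_dist y y') ht.1)
  · have hm : 0 ≤ min t (1 - t) := le_min ht.1 h1t
    calc |c * min t (1 - t) * dist x y - c * min t (1 - t) * dist x' y'|
        = c * min t (1 - t) * |dist x y - dist x' y'| := by
          rw [← mul_sub, abs_mul, abs_of_nonneg (mul_nonneg hc0 hm)]
      _ ≤ 1 * min t (1 - t) * (dist x x' + dist y y') := by
          gcongr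
          simpa [Real.dist_eq] using dist_dist_dist_le x y x' y'
      _ ≤ (1 - t) * dist x x' + t * dist y y' := by
          rw [one_mul, mul_add]
          gcongr
          exacts [min_le_right _ _, min_le_left _ _]

variable (c) in
theorem isReversible_tentBicombing : IsReversible (tentBicombing c) :=
  fun x y t _ => tentBicombing_symm x y t

theorem isGeodesicBicombing_tentBicombing (hc0 : 0 ≤ c) (hc1 : c ≤ 1) :
    IsGeodesicBicombing (tentBicombing c) :=
  isGeodesicBicombing_of_dist_le tentBicombing_apply_zero tentBicombing_apply_one
    fun x y _ hs _ ht => dist_tentBicombing_le x y hc0 hc1 hs ht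

theorem isConical_tentBicombing (hc0 : 0 ≤ c) (hc1 : c ≤ 1) : IsConical (tentBicombing c) :=
  fun x y x' y' _ ht => dist_tentBicombing_tentBicombing_le x y hc0 hc1 x' y' ht

theorem coe_tentBicombing_zero {t : ℝ} (ht : t ∈ Icc (0 : ℝ) 1) :
    (tentBicombing 0 x y t : ℝ × ℝ) = (1 - t) • (x : ℝ × ℝ) + t • (y : ℝ × ℝ) := by
  ext
  · simp [tentBicombing]
  · simp only [snd_tentBicombing x y ht, zero_mul, Prod.snd_add, Prod.smul_snd, smul_eq_mul]
    exact max_eq_left (by nlinarith [x.2, y.2, ht.1, ht.2])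

theorem tentBicombing_one_midpoint :
    tentBicombing 1 ⟨(-1, 0), le_refl 0⟩ ⟨(1, 0), le_refl 0⟩ (1 / 2) = ⟨(0, 1), zero_le_one⟩ := by
  have hd : dist (⟨(-1, 0), le_refl 0⟩ : UpperHalfPlaneSup) ⟨(1, 0), le_refl 0⟩ = 2 := by
    rw [dist_eq]; norm_num
  ext <;> norm_num [tentBicombing, hd]

end UpperHalfPlaneSup

open UpperHalfPlaneSup

/-- **The upper half-plane `H ⊆ ℓ∞²` admits two distinct reversible conical geodesic
bicombings**: besides the bicombing `τ` given by linear segments, there is a reversible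
conical geodesic bicombing `σ` with `σ (-1,0) (1,0) (1/2) = (0,1)`, which therefore differs
from `τ`. -/
theorem upperHalfPlane_two_distinct_reversible_conical_bicombings :
    ∃ σ τ : UpperHalfPlaneSup → UpperHalfPlaneSup → ℝ → UpperHalfPlaneSup,
      (IsGeodesicBicombing σ ∧ IsConical σ ∧ IsReversible σ) ∧
      (IsGeodesicBicombing τ ∧ IsConical τ ∧ IsReversible τ) ∧
      (∀ x y : UpperHalfPlaneSup, ∀ t ∈ Set.Icc (0:ℝ) 1,
        (τ x y t : ℝ × ℝ) = (1 - t) • (x : ℝ × ℝ) + t • (y : ℝ × ℝ)) ∧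
      σ ⟨(-1, 0), le_refl 0⟩ ⟨(1, 0), le_refl 0⟩ (1/2) = ⟨(0, 1), zero_le_one⟩ ∧
      σ ⟨(-1, 0), le_refl 0⟩ ⟨(1, 0), le_refl 0⟩ (1/2) ≠
        τ ⟨(-1, 0), le_refl 0⟩ ⟨(1, 0), le_refl 0⟩ (1/2) := by
  refine ⟨tentBicombing 1, tentBicombing 0,
    ⟨isGeodesicBicombing_tentBicombing zero_le_one le_rfl,
      isConical_tentBicombing zero_le_one le_rfl, isReversible_tentBicombing 1⟩,
    ⟨isGeodesicBicombing_tentBicombing le_rfl zero_le_one,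
      isConical_tentBicombing le_rfl zero_le_one, isReversible_tentBicombing 0⟩,
    coe_tentBicombing_zero, tentBicombing_one_midpoint, ?_⟩
  rw [tentBicombing_one_midpoint, Ne, ← Subtype.coe_inj,
    coe_tentBicombing_zero _ _ ⟨by norm_num, by norm_num⟩]
  norm_num
end

section
/- Let (X,d) be a metric space, let x₁, x₂, y₁, y₂ ∈ X, and let s, t ∈ [0,1]. Then W₁((1−s)·δ_{x₁} + s·δ_{x₂}, (1−t)·δ_{y₁} + t·δ_{y₂}) = min over λ ∈ [max(s+t−1, 0), min(s,t)] of (1−(s+t)+λ)·d(x₁,y₁) + (s−λ)·d(x₂,y₁) + (t−λ)·d(x₁,y₂) + λ·d(x₂,y₂). -/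
open scoped ENNReal
open MeasureTheory

/-- The first Wasserstein distance between two (probability) measures: the infimum of
`∫ d(x,y) dγ` over all couplings `γ` of the pair, i.e. probability measures on `X × X`
with first marginal `μ` and second marginal `ν`. -/
noncomputable def W1 {X : Type*} [MetricSpace X] [MeasurableSpace X]
    (μ ν : MeasureTheory.Measure X) : ℝ≥0∞ :=
  ⨅ (γ : MeasureTheory.Measure (X × X)) (_ : MeasureTheory.IsProbabilityMeasure γ ∧
      γ.map Prod.fst = μ ∧ γ.map Prod.snd = ν),
    ∫⁻ p, edist p.1 p.2 ∂γ

/-- Membership in `P₁(X)`: a Radon probability measure with finite first moment. -/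
def MemP1 {X : Type*} [MetricSpace X] [MeasurableSpace X]
    (μ : MeasureTheory.Measure X) : Prop :=
  MeasureTheory.IsProbabilityMeasure μ ∧ μ.InnerRegular ∧
    ∀ x₀ : X, (∫⁻ x, edist x x₀ ∂μ) ≠ ⊤

/-- `P₁(X)`: the space of Radon probability measures on `X` with finite first moment. -/
abbrev P1 (X : Type*) [MetricSpace X] [MeasurableSpace X] : Type _ :=
  {μ : MeasureTheory.Measure X // MemP1 μ}

/-- A contracting barycenter map: a `1`-Lipschitz map `β : P₁(X) → X` (with respect to the
first Wasserstein distance) such that `β δ_x = x` for every `x`. -/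
def IsContractingBarycenter {X : Type*} [MetricSpace X] [MeasurableSpace X]
    (β : P1 X → X) : Prop :=
  (∀ μ ν : P1 X, edist (β μ) (β ν) ≤ W1 μ.1 ν.1) ∧
    ∀ (x : X) (μ : P1 X), μ.1 = MeasureTheory.Measure.dirac x → β μ = x

/-!
A coupling of the two measures charging only the pairs `(xᵢ, yⱼ)` is determined by the mass `λ`
it puts on `(x₂, y₂)`, and its cost is affine in `λ` with slope
`d(x₁,y₁) + d(x₂,y₂) - d(x₁,y₂) - d(x₂,y₁)`. So the minimum over the admissible `λ` is attained at
the endpoint picked by the sign of the slope, and that coupling bounds `W₁` from above.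
For the lower bound we avoid decomposing an arbitrary coupling (the support points may coincide)
and use Kantorovich potentials instead: functions `u, v` with `u x + v y ≤ d(x, y)` on the four
pairs, whose dual value `∫ u dμ + ∫ v dν` equals the cost at that endpoint.
-/

theorem MeasureTheory.Integrable.ofReal_integral_le_lintegral_ofReal {α : Type*}
    [MeasurableSpace α] {μ : Measure α} {f : α → ℝ} (hf : Integrable f μ) :
    ENNReal.ofReal (∫ a, f a ∂μ) ≤ ∫⁻ a, ENNReal.ofReal (f a) ∂μ :=
  calc ENNReal.ofReal (∫ a, f a ∂μ)
      ≤ ENNReal.ofReal (∫⁻ a, ENNReal.ofReal (f a) ∂μ).toReal := by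
        rw [integral_eq_lintegral_pos_part_sub_lintegral_neg_part hf]
        exact ENNReal.ofReal_le_ofReal (sub_le_self _ ENNReal.toReal_nonneg)
    _ ≤ ∫⁻ a, ENNReal.ofReal (f a) ∂μ := ENNReal.ofReal_toReal_le

theorem ofReal_integral_add_le_lintegral_edist {X : Type*} [PseudoMetricSpace X]
    [MeasurableSpace X] {γ : Measure (X × X)} {u v : X → ℝ}
    {A B : Set X} (hu : Integrable u (γ.map Prod.fst)) (hv : Integrable v (γ.map Prod.snd))
    (hA : ∀ᵐ x ∂γ.map Prod.fst, x ∈ A) (hB : ∀ᵐ y ∂γ.map Prod.snd, y ∈ B)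
    (huv : ∀ x ∈ A, ∀ y ∈ B, u x + v y ≤ dist x y) :
    ENNReal.ofReal (∫ x, u x ∂γ.map Prod.fst + ∫ y, v y ∂γ.map Prod.snd) ≤
      ∫⁻ p, edist p.1 p.2 ∂γ := by
  have hu' : Integrable (fun p : X × X => u p.1) γ := hu.comp_measurable measurable_fst
  have hv' : Integrable (fun p : X × X => v p.2) γ := hv.comp_measurable measurable_snd
  rw [integral_map measurable_fst.aemeasurable hu.aestronglyMeasurable,
    integral_map measurable_snd.aemeasurable hv.aestronglyMeasurable, ← integral_add hu' hv']
  refine (hu'.add hv').ofReal_integral_le_lintegral_ofReal.trans (lintegral_mono_ae ?_)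
  filter_upwards [ae_of_ae_map measurable_fst.aemeasurable hA,
    ae_of_ae_map measurable_snd.aemeasurable hB] with p hpA hpB
  rw [edist_dist]
  exact ENNReal.ofReal_le_ofReal (huv _ hpA _ hpB)

theorem ofReal_integral_add_le_W1 {X : Type*} [MetricSpace X] [MeasurableSpace X]
    {μ ν : Measure X} {u v : X → ℝ} {A B : Set X} (hu : Integrable u μ) (hv : Integrable v ν)
    (hA : ∀ᵐ x ∂μ, x ∈ A) (hB : ∀ᵐ y ∂ν, y ∈ B)
    (huv : ∀ x ∈ A, ∀ y ∈ B, u x + v y ≤ dist x y) :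
    ENNReal.ofReal (∫ x, u x ∂μ + ∫ y, v y ∂ν) ≤ W1 μ ν := by
  refine le_iInf₂ fun γ ⟨_, hγ₁, hγ₂⟩ => ?_
  subst hγ₁ hγ₂
  exact ofReal_integral_add_le_lintegral_edist hu hv hA hB huv

section TwoPoint

variable {X : Type*} [MeasurableSpace X]

noncomputable def twoPointMeasure (x₁ x₂ : X) (s : ℝ) : Measure X :=
  ENNReal.ofReal (1 - s) • Measure.dirac x₁ + ENNReal.ofReal s • Measure.dirac x₂

theorem integrable_twoPointMeasure [MeasurableSingletonClass X] (u : X → ℝ) (x₁ x₂ : X) (s : ℝ) :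
    Integrable u (twoPointMeasure x₁ x₂ s) :=
  ((integrable_dirac enorm_lt_top).smul_measure ENNReal.ofReal_ne_top).add_measure
    ((integrable_dirac enorm_lt_top).smul_measure ENNReal.ofReal_ne_top)

theorem integral_twoPointMeasure [MeasurableSingletonClass X] (u : X → ℝ) (x₁ x₂ : X) {s : ℝ}
    (hs : s ∈ Set.Icc (0 : ℝ) 1) :
    ∫ x, u x ∂twoPointMeasure x₁ x₂ s = (1 - s) * u x₁ + s * u x₂ := by
  rw [twoPointMeasure, integral_add_measure
    ((integrable_dirac enorm_lt_top).smul_measure ENNReal.ofReal_ne_top)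
    ((integrable_dirac enorm_lt_top).smul_measure ENNReal.ofReal_ne_top),
    integral_smul_measure, integral_smul_measure, integral_dirac, integral_dirac,
    ENNReal.toReal_ofReal (sub_nonneg.2 hs.2), ENNReal.toReal_ofReal hs.1, smul_eq_mul,
    smul_eq_mul]

theorem isProbabilityMeasure_twoPointMeasure (x₁ x₂ : X) {s : ℝ} (hs : s ∈ Set.Icc (0 : ℝ) 1) :
    IsProbabilityMeasure (twoPointMeasure x₁ x₂ s) := by
  constructor
  simp only [twoPointMeasure, Measure.add_apply, Measure.smul_apply, measure_univ, smul_eq_mul,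
    mul_one]
  rw [← ENNReal.ofReal_add (sub_nonneg.2 hs.2) hs.1, sub_add_cancel, ENNReal.ofReal_one]

theorem ae_mem_twoPointMeasure [MeasurableSingletonClass X] (x₁ x₂ : X) (s : ℝ) :
    ∀ᵐ x ∂twoPointMeasure x₁ x₂ s, x ∈ ({x₁, x₂} : Set X) := by
  refine ae_add_measure_iff.2 ⟨Measure.ae_smul_measure ?_ _, Measure.ae_smul_measure ?_ _⟩ <;>
    simp [ae_dirac_eq]

end TwoPoint

section TwoPointCost

variable {X : Type*} [PseudoMetricSpace X] (x₁ x₂ y₁ y₂ : X)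

def twoPointCost (s t l : ℝ) : ℝ :=
  (1 - (s + t) + l) * dist x₁ y₁ + (s - l) * dist x₂ y₁ + (t - l) * dist x₁ y₂ + l * dist x₂ y₂

theorem twoPointCost_sub_twoPointCost (s t l l' : ℝ) :
    twoPointCost x₁ x₂ y₁ y₂ s t l' - twoPointCost x₁ x₂ y₁ y₂ s t l =
      (dist x₁ y₁ + dist x₂ y₂ - (dist x₁ y₂ + dist x₂ y₁)) * (l' - l) := by
  unfold twoPointCost
  ring

variable {x₁ x₂ y₁ y₂}

theorem twoPointCost_monotone (h : dist x₁ y₂ + dist x₂ y₁ ≤ dist x₁ y₁ + dist x₂ y₂) (s t : ℝ) :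
    Monotone (twoPointCost x₁ x₂ y₁ y₂ s t) := fun l l' hl => by
  have := twoPointCost_sub_twoPointCost x₁ x₂ y₁ y₂ s t l l'
  nlinarith [mul_nonneg (sub_nonneg.2 h) (sub_nonneg.2 hl)]

theorem twoPointCost_antitone (h : dist x₁ y₁ + dist x₂ y₂ ≤ dist x₁ y₂ + dist x₂ y₁) (s t : ℝ) :
    Antitone (twoPointCost x₁ x₂ y₁ y₂ s t) := fun l l' hl => by
  have := twoPointCost_sub_twoPointCost x₁ x₂ y₁ y₂ s t l' l
  nlinarith [mul_nonneg (sub_nonneg.2 h) (sub_nonneg.2 hl)]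

end TwoPointCost

theorem twoPointCoupling_weights_nonneg {s t l : ℝ}
    (hl : l ∈ Set.Icc (max (s + t - 1) 0) (min s t)) :
    0 ≤ 1 - (s + t) + l ∧ 0 ≤ s - l ∧ 0 ≤ t - l ∧ 0 ≤ l := by
  obtain ⟨⟨h₁, h₀⟩, hs, ht⟩ := And.intro (max_le_iff.1 hl.1) (le_min_iff.1 hl.2)
  exact ⟨by linarith, by linarith, by linarith, h₀⟩

section TwoPointCoupling

variable {X : Type*} [MeasurableSpace X] (x₁ x₂ y₁ y₂ : X) {s t l : ℝ}

noncomputable def twoPointCoupling (s t l : ℝ) : Measure (X × X) :=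
  ENNReal.ofReal (1 - (s + t) + l) • Measure.dirac (x₁, y₁) +
    ENNReal.ofReal (s - l) • Measure.dirac (x₂, y₁) +
    ENNReal.ofReal (t - l) • Measure.dirac (x₁, y₂) + ENNReal.ofReal l • Measure.dirac (x₂, y₂)

theorem map_fst_twoPointCoupling (hl : l ∈ Set.Icc (max (s + t - 1) 0) (min s t)) :
    (twoPointCoupling x₁ x₂ y₁ y₂ s t l).map Prod.fst = twoPointMeasure x₁ x₂ s := by
  obtain ⟨h₁₁, h₂₁, h₁₂, h₂₂⟩ := twoPointCoupling_weights_nonneg hl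
  have e₁ : ENNReal.ofReal (1 - s) =
      ENNReal.ofReal (1 - (s + t) + l) + ENNReal.ofReal (t - l) := by
    rw [← ENNReal.ofReal_add h₁₁ h₁₂]; ring_nf
  have e₂ : ENNReal.ofReal s = ENNReal.ofReal (s - l) + ENNReal.ofReal l := by
    rw [← ENNReal.ofReal_add h₂₁ h₂₂]; ring_nf
  simp only [twoPointCoupling, twoPointMeasure, Measure.map_add _ _ measurable_fst,
    Measure.map_smul, Measure.map_dirac' measurable_fst, e₁, e₂, add_smul]
  abel

theorem map_snd_twoPointCoupling (hl : l ∈ Set.Icc (max (s + t - 1) 0) (min s t)) :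
    (twoPointCoupling x₁ x₂ y₁ y₂ s t l).map Prod.snd = twoPointMeasure y₁ y₂ t := by
  obtain ⟨h₁₁, h₂₁, h₁₂, h₂₂⟩ := twoPointCoupling_weights_nonneg hl
  have e₁ : ENNReal.ofReal (1 - t) =
      ENNReal.ofReal (1 - (s + t) + l) + ENNReal.ofReal (s - l) := by
    rw [← ENNReal.ofReal_add h₁₁ h₂₁]; ring_nf
  have e₂ : ENNReal.ofReal t = ENNReal.ofReal (t - l) + ENNReal.ofReal l := by
    rw [← ENNReal.ofReal_add h₁₂ h₂₂]; ring_nf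
  simp only [twoPointCoupling, twoPointMeasure, Measure.map_add _ _ measurable_snd,
    Measure.map_smul, Measure.map_dirac' measurable_snd, e₁, e₂, add_smul]
  abel

theorem isProbabilityMeasure_twoPointCoupling
    (hl : l ∈ Set.Icc (max (s + t - 1) 0) (min s t)) :
    IsProbabilityMeasure (twoPointCoupling x₁ x₂ y₁ y₂ s t l) := by
  obtain ⟨h₁₁, h₂₁, h₁₂, h₂₂⟩ := twoPointCoupling_weights_nonneg hl
  rw [← Measure.isProbabilityMeasure_map_iff measurable_fst.aemeasurable,
    map_fst_twoPointCoupling x₁ x₂ y₁ y₂ hl]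
  exact isProbabilityMeasure_twoPointMeasure x₁ x₂ ⟨by linarith, by linarith⟩

end TwoPointCoupling

theorem lintegral_edist_twoPointCoupling {X : Type*} [PseudoMetricSpace X] [MeasurableSpace X]
    [MeasurableSingletonClass X] (x₁ x₂ y₁ y₂ : X) {s t l : ℝ}
    (hl : l ∈ Set.Icc (max (s + t - 1) 0) (min s t)) :
    ∫⁻ p, edist p.1 p.2 ∂twoPointCoupling x₁ x₂ y₁ y₂ s t l =
      ENNReal.ofReal (twoPointCost x₁ x₂ y₁ y₂ s t l) := by
  obtain ⟨h₁₁, h₂₁, h₁₂, h₂₂⟩ := twoPointCoupling_weights_nonneg hl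
  have d₁₁ := mul_nonneg h₁₁ (dist_nonneg (x := x₁) (y := y₁))
  have d₂₁ := mul_nonneg h₂₁ (dist_nonneg (x := x₂) (y := y₁))
  have d₁₂ := mul_nonneg h₁₂ (dist_nonneg (x := x₁) (y := y₂))
  have d₂₂ := mul_nonneg h₂₂ (dist_nonneg (x := x₂) (y := y₂))
  simp only [twoPointCoupling, twoPointCost, lintegral_add_measure, lintegral_smul_measure,
    lintegral_dirac, edist_dist, smul_eq_mul, ← ENNReal.ofReal_mul h₁₁, ← ENNReal.ofReal_mul h₂₁,
    ← ENNReal.ofReal_mul h₁₂, ← ENNReal.ofReal_mul h₂₂]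
  rw [ENNReal.ofReal_add (by positivity) d₂₂, ENNReal.ofReal_add (by positivity) d₁₂,
    ENNReal.ofReal_add d₁₁ d₂₁]

section W1TwoPoint

variable {X : Type*} [MetricSpace X] [MeasurableSpace X] [MeasurableSingletonClass X]
  {x₁ x₂ y₁ y₂ : X} {s t : ℝ}

theorem W1_twoPointMeasure_le {l : ℝ} (hl : l ∈ Set.Icc (max (s + t - 1) 0) (min s t)) :
    W1 (twoPointMeasure x₁ x₂ s) (twoPointMeasure y₁ y₂ t) ≤
      ENNReal.ofReal (twoPointCost x₁ x₂ y₁ y₂ s t l) :=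
  calc W1 (twoPointMeasure x₁ x₂ s) (twoPointMeasure y₁ y₂ t)
      ≤ ∫⁻ p, edist p.1 p.2 ∂twoPointCoupling x₁ x₂ y₁ y₂ s t l :=
        iInf₂_le _ ⟨isProbabilityMeasure_twoPointCoupling x₁ x₂ y₁ y₂ hl,
          map_fst_twoPointCoupling x₁ x₂ y₁ y₂ hl, map_snd_twoPointCoupling x₁ x₂ y₁ y₂ hl⟩
    _ = ENNReal.ofReal (twoPointCost x₁ x₂ y₁ y₂ s t l) :=
        lintegral_edist_twoPointCoupling x₁ x₂ y₁ y₂ hl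

theorem ofReal_le_W1_twoPointMeasure (hs : s ∈ Set.Icc (0 : ℝ) 1) (ht : t ∈ Set.Icc (0 : ℝ) 1)
    (u v : X → ℝ) (h₁₁ : u x₁ + v y₁ ≤ dist x₁ y₁) (h₂₁ : u x₂ + v y₁ ≤ dist x₂ y₁)
    (h₁₂ : u x₁ + v y₂ ≤ dist x₁ y₂) (h₂₂ : u x₂ + v y₂ ≤ dist x₂ y₂) :
    ENNReal.ofReal ((1 - s) * u x₁ + s * u x₂ + ((1 - t) * v y₁ + t * v y₂)) ≤
      W1 (twoPointMeasure x₁ x₂ s) (twoPointMeasure y₁ y₂ t) := by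
  rw [← integral_twoPointMeasure u x₁ x₂ hs, ← integral_twoPointMeasure v y₁ y₂ ht]
  refine ofReal_integral_add_le_W1 (integrable_twoPointMeasure u x₁ x₂ s)
    (integrable_twoPointMeasure v y₁ y₂ t) (ae_mem_twoPointMeasure x₁ x₂ s)
    (ae_mem_twoPointMeasure y₁ y₂ t) ?_
  rintro x (rfl | rfl) y (rfl | rfl) <;> assumption

/- In each case the potentials `u`, `v` are tight on the three pairs charged by
`twoPointCoupling`, and the inequality on the fourth pair is the hypothesis `h`. -/
theorem ofReal_twoPointCost_max_le_W1 (hs : s ∈ Set.Icc (0 : ℝ) 1) (ht : t ∈ Set.Icc (0 : ℝ) 1)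
    (h : dist x₁ y₂ + dist x₂ y₁ ≤ dist x₁ y₁ + dist x₂ y₂) :
    ENNReal.ofReal (twoPointCost x₁ x₂ y₁ y₂ s t (max (s + t - 1) 0)) ≤
      W1 (twoPointMeasure x₁ x₂ s) (twoPointMeasure y₁ y₂ t) := by
  rcases le_total (s + t) 1 with hst | hst
  · refine (congrArg ENNReal.ofReal ?_).trans_le <| ofReal_le_W1_twoPointMeasure hs ht
      (fun x => dist x y₁) (fun y => dist x₁ y - dist x₁ y₁)
      (by simp) (by simp) (by simp) (by linarith)
    rw [twoPointCost, max_eq_right (sub_nonpos.2 hst)]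
    ring
  · refine (congrArg ENNReal.ofReal ?_).trans_le <| ofReal_le_W1_twoPointMeasure hs ht
      (fun x => dist x y₂ - dist x₂ y₂) (fun y => dist x₂ y)
      (by linarith) (by simp) (by simp) (by simp)
    rw [twoPointCost, max_eq_left (sub_nonneg.2 hst)]
    ring

theorem ofReal_twoPointCost_min_le_W1 (hs : s ∈ Set.Icc (0 : ℝ) 1) (ht : t ∈ Set.Icc (0 : ℝ) 1)
    (h : dist x₁ y₁ + dist x₂ y₂ ≤ dist x₁ y₂ + dist x₂ y₁) :
    ENNReal.ofReal (twoPointCost x₁ x₂ y₁ y₂ s t (min s t)) ≤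
      W1 (twoPointMeasure x₁ x₂ s) (twoPointMeasure y₁ y₂ t) := by
  rcases le_total s t with hst | hst
  · refine (congrArg ENNReal.ofReal ?_).trans_le <| ofReal_le_W1_twoPointMeasure hs ht
      (fun x => dist x y₂ - dist x₁ y₂) (fun y => dist x₁ y)
      (by simp) (by linarith) (by simp) (by simp)
    rw [twoPointCost, min_eq_left hst]
    ring
  · refine (congrArg ENNReal.ofReal ?_).trans_le <| ofReal_le_W1_twoPointMeasure hs ht
      (fun x => dist x y₁) (fun y => dist x₂ y - dist x₂ y₁)
      (by simp) (by simp) (by linarith) (by simp)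
    rw [twoPointCost, min_eq_right hst]
    ring

end W1TwoPoint

/-- **Lemma 2.4.** For `s, t ∈ [0,1]`,
`W₁((1-s)δ_{x₁} + sδ_{x₂}, (1-t)δ_{y₁} + tδ_{y₂})` equals the minimum over
`λ ∈ [max (s+t-1) 0, min s t]` of
`(1-(s+t)+λ)d(x₁,y₁) + (s-λ)d(x₂,y₁) + (t-λ)d(x₁,y₂) + λd(x₂,y₂)`. -/
theorem W1_two_point_measures
    {X : Type*} [MetricSpace X] [MeasurableSpace X] [BorelSpace X]
    (x₁ x₂ y₁ y₂ : X) (s t : ℝ) (hs : s ∈ Set.Icc (0:ℝ) 1) (ht : t ∈ Set.Icc (0:ℝ) 1) :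
    ∃ l ∈ Set.Icc (max (s + t - 1) 0) (min s t),
      W1 (ENNReal.ofReal (1 - s) • Measure.dirac x₁ + ENNReal.ofReal s • Measure.dirac x₂)
          (ENNReal.ofReal (1 - t) • Measure.dirac y₁ + ENNReal.ofReal t • Measure.dirac y₂) =
        ENNReal.ofReal ((1 - (s + t) + l) * dist x₁ y₁ + (s - l) * dist x₂ y₁
          + (t - l) * dist x₁ y₂ + l * dist x₂ y₂) ∧
      ∀ l' ∈ Set.Icc (max (s + t - 1) 0) (min s t),
        (1 - (s + t) + l) * dist x₁ y₁ + (s - l) * dist x₂ y₁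
            + (t - l) * dist x₁ y₂ + l * dist x₂ y₂ ≤
          (1 - (s + t) + l') * dist x₁ y₁ + (s - l') * dist x₂ y₁
            + (t - l') * dist x₁ y₂ + l' * dist x₂ y₂ := by
  have hI : max (s + t - 1) 0 ≤ min s t :=
    max_le (le_min (by linarith [ht.2]) (by linarith [hs.2])) (le_min hs.1 ht.1)
  rcases le_total (dist x₁ y₂ + dist x₂ y₁) (dist x₁ y₁ + dist x₂ y₂) with h | h
  · exact ⟨_, ⟨le_rfl, hI⟩,
      (W1_twoPointMeasure_le ⟨le_rfl, hI⟩).antisymm (ofReal_twoPointCost_max_le_W1 hs ht h),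
      fun l' hl' => twoPointCost_monotone h s t hl'.1⟩
  · exact ⟨_, ⟨hI, le_rfl⟩,
      (W1_twoPointMeasure_le ⟨hI, le_rfl⟩).antisymm (ofReal_twoPointCost_min_le_W1 hs ht h),
      fun l' hl' => twoPointCost_antitone h s t hl'.2⟩
end

section
/- Let (X,d) be a metric space and let β : P₁(X) → X be a contracting barycenter map. Then the map σ_β : X × X × [0,1] → X defined by σ_β(x,y,t) = β((1−t)·δ_x + t·δ_y) is a reversible conical geodesic bicombing on X. -/
/-!
Since `β` is `1`-Lipschitz for `W₁`, every coupling of `(1-s)δ_x + sδ_y` and `(1-t)δ_{x'} + tδ_{y'}`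
bounds `d(σ(x,y,s), σ(x',y',t))` by its transport cost. The coupling `x ↦ x'`, `y ↦ y'` gives
conicality. For `s ≤ t`, leaving the masses `1-t` at `x` and `s` at `y` in place and moving only
the mass `t-s` from `x` to `y` gives `d(σ_s, σ_t) ≤ (t-s) d(x,y)`; as `σ_0 = x` and `σ_1 = y`,
the triangle inequality `d(x,y) ≤ d(σ_0,σ_s) + d(σ_s,σ_t) + d(σ_t,σ_1)` forces equality.
Reversibility holds because `σ(x,y,t)` and `σ(y,x,1-t)` are barycenters of the same measure.
-/

open scoped ENNReal
open MeasureTheory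

open Set

namespace MeasureTheory.Measure

instance innerRegular_dirac {X : Type*} [TopologicalSpace X] [MeasurableSpace X] (x : X) :
    (dirac x).InnerRegular := by
  refine ⟨fun U hU r hr => ⟨{x}, ?_, isCompact_singleton, ?_⟩⟩
  · have hxU : x ∈ U := by
      by_contra hxU
      simp [dirac_apply' x hU, hxU] at hr
    exact singleton_subset_iff.2 hxU
  · rw [dirac_apply_of_mem (mem_singleton x)]
    exact hr.trans_le prob_le_one

theorem map_sum_smul_dirac {α β ι : Type*} [MeasurableSpace α] [MeasurableSpace β] [Fintype ι]
    {f : α → β} (hf : Measurable f) (a : ι → ℝ≥0∞) (p : ι → α) :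
    (∑ i, a i • dirac (p i)).map f = ∑ i, a i • dirac (f (p i)) := by
  simp [map_finset_sum' hf.aemeasurable, map_dirac' hf]

end MeasureTheory.Measure

open Measure

section Wasserstein

variable {X : Type*} [MetricSpace X] [MeasurableSpace X]

theorem W1_map_fst_map_snd_le (γ : Measure (X × X)) [IsProbabilityMeasure γ] :
    W1 (γ.map Prod.fst) (γ.map Prod.snd) ≤ ∫⁻ p, edist p.1 p.2 ∂γ :=
  iInf₂_le γ ⟨‹_›, rfl, rfl⟩

theorem W1_sum_smul_dirac_le [MeasurableSingletonClass X] {ι : Type*} [Fintype ι]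
    {a : ι → ℝ≥0∞} (ha : ∑ i, a i = 1) (p : ι → X × X) :
    W1 (∑ i, a i • dirac (p i).1) (∑ i, a i • dirac (p i).2) ≤
      ∑ i, a i * edist (p i).1 (p i).2 := by
  set γ : Measure (X × X) := ∑ i, a i • dirac (p i)
  have : IsProbabilityMeasure γ := ⟨by simp [γ, ha]⟩
  calc W1 (∑ i, a i • dirac (p i).1) (∑ i, a i • dirac (p i).2)
      = W1 (γ.map Prod.fst) (γ.map Prod.snd) := by
        rw [map_sum_smul_dirac measurable_fst, map_sum_smul_dirac measurable_snd]
    _ ≤ ∫⁻ q, edist q.1 q.2 ∂γ := W1_map_fst_map_snd_le γ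
    _ = ∑ i, a i * edist (p i).1 (p i).2 := by
        simp [γ, lintegral_finsetSum_measure, lintegral_dirac]

end Wasserstein

section Segment

variable {X : Type*} [MeasurableSpace X]

noncomputable def segmentMeasure (x y : X) (t : ℝ) : Measure X :=
  ENNReal.ofReal (1 - t) • dirac x + ENNReal.ofReal t • dirac y

theorem ENNReal.ofReal_one_sub_add_ofReal {t : ℝ} (ht : t ∈ Icc (0 : ℝ) 1) :
    ENNReal.ofReal (1 - t) + ENNReal.ofReal t = 1 := by
  rw [← ENNReal.ofReal_add (sub_nonneg.2 ht.2) ht.1, sub_add_cancel, ENNReal.ofReal_one]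

theorem segmentMeasure_zero (x y : X) : segmentMeasure x y 0 = dirac x := by
  simp [segmentMeasure]

theorem segmentMeasure_one (x y : X) : segmentMeasure x y 1 = dirac y := by
  simp [segmentMeasure]

theorem segmentMeasure_one_sub (x y : X) (t : ℝ) :
    segmentMeasure y x (1 - t) = segmentMeasure x y t := by
  rw [segmentMeasure, segmentMeasure, sub_sub_cancel, add_comm]

theorem memP1_segmentMeasure [MetricSpace X] [BorelSpace X] (x y : X) {t : ℝ}
    (ht : t ∈ Icc (0 : ℝ) 1) : MemP1 (segmentMeasure x y t) := by
  refine ⟨⟨by simp [segmentMeasure, ENNReal.ofReal_one_sub_add_ofReal ht]⟩,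
    by unfold segmentMeasure; infer_instance, fun x₀ => ?_⟩
  simp [segmentMeasure, lintegral_add_measure, lintegral_dirac, ENNReal.mul_eq_top,
    edist_ne_top]

theorem W1_segmentMeasure_le [MetricSpace X] [MeasurableSingletonClass X] (x y x' y' : X)
    {t : ℝ} (ht : t ∈ Icc (0 : ℝ) 1) :
    W1 (segmentMeasure x y t) (segmentMeasure x' y' t) ≤
      ENNReal.ofReal ((1 - t) * dist x x' + t * dist y y') := by
  have h := W1_sum_smul_dirac_le (a := ![ENNReal.ofReal (1 - t), ENNReal.ofReal t])
    (by simpa using ENNReal.ofReal_one_sub_add_ofReal ht) ![(x, x'), (y, y')]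
  simp only [Fin.sum_univ_two, Matrix.cons_val_zero, Matrix.cons_val_one] at h
  rwa [ENNReal.ofReal_add (mul_nonneg (sub_nonneg.2 ht.2) dist_nonneg)
      (mul_nonneg ht.1 dist_nonneg), ENNReal.ofReal_mul (sub_nonneg.2 ht.2),
    ENNReal.ofReal_mul ht.1, ← edist_dist, ← edist_dist]

theorem W1_segmentMeasure_le_of_le [MetricSpace X] [MeasurableSingletonClass X] (x y : X)
    {s t : ℝ} (hs : 0 ≤ s) (hst : s ≤ t) (ht : t ≤ 1) :
    W1 (segmentMeasure x y s) (segmentMeasure x y t) ≤ ENNReal.ofReal ((t - s) * dist x y) := by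
  have hsplit : ∀ {a b : ℝ}, 0 ≤ a → 0 ≤ b →
      ENNReal.ofReal a + ENNReal.ofReal b = ENNReal.ofReal (a + b) :=
    fun ha hb => (ENNReal.ofReal_add ha hb).symm
  have h := W1_sum_smul_dirac_le
    (a := ![ENNReal.ofReal (1 - t), ENNReal.ofReal (t - s), ENNReal.ofReal s])
    (by
      simp only [Fin.sum_univ_three, Matrix.cons_val_zero, Matrix.cons_val_one,
        Matrix.cons_val_two, Matrix.tail_cons, Matrix.head_cons]
      rw [hsplit (sub_nonneg.2 ht) (sub_nonneg.2 hst), hsplit (by linarith) hs]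
      simp)
    ![(x, x), (x, y), (y, y)]
  simp only [Fin.sum_univ_three, Matrix.cons_val_zero, Matrix.cons_val_one,
    Matrix.cons_val_two, Matrix.tail_cons, Matrix.head_cons, edist_self, mul_zero, zero_add,
    add_zero] at h
  rwa [← add_smul, add_assoc, ← add_smul, hsplit (sub_nonneg.2 ht) (sub_nonneg.2 hst),
    hsplit (sub_nonneg.2 hst) hs, sub_add_sub_cancel, sub_add_cancel, edist_dist,
    ← ENNReal.ofReal_mul (sub_nonneg.2 hst)] at h

end Segment

theorem dist_eq_abs_sub_mul_of_forall_dist_le {X : Type*} [PseudoMetricSpace X] {f : ℝ → X}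
    (hf : ∀ s t, 0 ≤ s → s ≤ t → t ≤ 1 → dist (f s) (f t) ≤ (t - s) * dist (f 0) (f 1))
    {s t : ℝ} (hs : s ∈ Icc (0 : ℝ) 1) (ht : t ∈ Icc (0 : ℝ) 1) :
    dist (f s) (f t) = |s - t| * dist (f 0) (f 1) := by
  wlog hst : s ≤ t generalizing s t
  · rw [dist_comm, abs_sub_comm]
    exact this ht hs (le_of_not_ge hst)
  rw [abs_of_nonpos (sub_nonpos.2 hst), neg_sub]
  refine le_antisymm (hf s t hs.1 hst ht.2) ?_
  have h0s := hf 0 s le_rfl hs.1 hs.2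
  have ht1 := hf t 1 ht.1 ht.2 le_rfl
  have := dist_triangle4 (f 0) (f s) (f t) (f 1)
  linarith

def IsBarycentricBicombing {X : Type*} [MetricSpace X] [MeasurableSpace X] (β : P1 X → X)
    (σ : X → X → ℝ → X) : Prop :=
  ∀ x y : X, ∀ t ∈ Icc (0 : ℝ) 1, ∀ μ : P1 X, μ.1 = segmentMeasure x y t → σ x y t = β μ

namespace IsBarycentricBicombing

variable {X : Type*} [MetricSpace X] [MeasurableSpace X] [BorelSpace X] {β : P1 X → X}
  {σ : X → X → ℝ → X}

theorem eq_barycenter (hσ : IsBarycentricBicombing β σ) (x y : X) {t : ℝ}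
    (ht : t ∈ Icc (0 : ℝ) 1) :
    σ x y t = β ⟨segmentMeasure x y t, memP1_segmentMeasure x y ht⟩ :=
  hσ x y t ht _ rfl

theorem edist_le_W1 (hσ : IsBarycentricBicombing β σ) (hβ : IsContractingBarycenter β)
    (x y x' y' : X) {s t : ℝ} (hs : s ∈ Icc (0 : ℝ) 1) (ht : t ∈ Icc (0 : ℝ) 1) :
    edist (σ x y s) (σ x' y' t) ≤ W1 (segmentMeasure x y s) (segmentMeasure x' y' t) := by
  rw [hσ.eq_barycenter x y hs, hσ.eq_barycenter x' y' ht]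
  exact hβ.1 _ _

theorem apply_zero (hσ : IsBarycentricBicombing β σ) (hβ : IsContractingBarycenter β)
    (x y : X) : σ x y 0 = x := by
  rw [hσ.eq_barycenter x y (left_mem_Icc.2 zero_le_one)]
  exact hβ.2 x _ (segmentMeasure_zero x y)

theorem apply_one (hσ : IsBarycentricBicombing β σ) (hβ : IsContractingBarycenter β)
    (x y : X) : σ x y 1 = y := by
  rw [hσ.eq_barycenter x y (right_mem_Icc.2 zero_le_one)]
  exact hβ.2 y _ (segmentMeasure_one x y)

theorem isGeodesicBicombing (hσ : IsBarycentricBicombing β σ)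
    (hβ : IsContractingBarycenter β) : IsGeodesicBicombing σ := by
  refine ⟨hσ.apply_zero hβ, hσ.apply_one hβ, fun x y s hs t ht => ?_⟩
  have hgeodesic := dist_eq_abs_sub_mul_of_forall_dist_le (f := σ x y)
    (fun s t hs hst ht => ?_) hs ht
  · rwa [hσ.apply_zero hβ, hσ.apply_one hβ] at hgeodesic
  rw [hσ.apply_zero hβ, hσ.apply_one hβ,
    ← edist_le_ofReal (mul_nonneg (sub_nonneg.2 hst) (@dist_nonneg _ _ x y))]
  exact (hσ.edist_le_W1 hβ x y x y ⟨hs, hst.trans ht⟩ ⟨hs.trans hst, ht⟩).trans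
    (W1_segmentMeasure_le_of_le x y hs hst ht)

theorem isConical (hσ : IsBarycentricBicombing β σ) (hβ : IsContractingBarycenter β) :
    IsConical σ := by
  intro x y x' y' t ht
  rw [← edist_le_ofReal (add_nonneg (mul_nonneg (sub_nonneg.2 ht.2) dist_nonneg)
    (mul_nonneg ht.1 dist_nonneg))]
  exact (hσ.edist_le_W1 hβ x y x' y' ht ht).trans (W1_segmentMeasure_le x y x' y' ht)

theorem isReversible (hσ : IsBarycentricBicombing β σ) : IsReversible σ := by
  intro x y t ht
  rw [hσ.eq_barycenter x y ht, hσ y x (1 - t) ⟨sub_nonneg.2 ht.2, sub_le_self 1 ht.1⟩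
    ⟨segmentMeasure x y t, memP1_segmentMeasure x y ht⟩ (segmentMeasure_one_sub x y t).symm]

end IsBarycentricBicombing

/-- **Lemma 2.6.** If `β : P₁(X) → X` is a contracting barycenter map, then the map
`σ_β (x, y, t) = β ((1-t)δ_x + tδ_y)` is a reversible conical geodesic bicombing on `X`.
(The map `σ` below is required to agree with `σ_β` for all `t ∈ [0,1]`.) -/
theorem contracting_barycenter_gives_reversible_conical_bicombing
    {X : Type*} [MetricSpace X] [MeasurableSpace X] [BorelSpace X]
    (β : P1 X → X) (hβ : IsContractingBarycenter β)
    (σ : X → X → ℝ → X)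
    (hσ : ∀ x y : X, ∀ t ∈ Set.Icc (0:ℝ) 1, ∀ μ : P1 X,
      μ.1 = ENNReal.ofReal (1 - t) • Measure.dirac x + ENNReal.ofReal t • Measure.dirac y →
        σ x y t = β μ) :
    IsGeodesicBicombing σ ∧ IsConical σ ∧ IsReversible σ := by
  have hσβ : IsBarycentricBicombing β σ := hσ
  exact ⟨hσβ.isGeodesicBicombing hβ, hσβ.isConical hβ, hσβ.isReversible⟩
end

section
/- Let (X,d) be an injective metric space, let x, y ∈ X, let t ∈ [0,1], and let z ∈ X be a point satisfying d(z,w) ≤ (1−t)·d(x,w) + t·d(y,w) for all w ∈ X (i.e. z belongs to the Doss expectation of the measure (1−t)·δ_x + t·δ_y). Then there exists a reversible conical geodesic bicombing σ on X such that σ(x,y,t) = z. -/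
/-!
Embed `X` isometrically into the Banach space `ℓ∞(X)` by `u ↦ (d(u, ·) - d(x, ·))`. The `w`-th
coordinate of `(1 - t) e(x) + t e(y) - e(w)` is `(1 - t) d(x, w) + t d(y, w)`, so the Doss condition
makes the map sending `e(u) ↦ u` and `(1 - t) e(x) + t e(y) ↦ z` `1`-Lipschitz. By injectivity it
extends to a `1`-Lipschitz retraction `g` of `ℓ∞(X)` onto `X`, and pushing the linear bicombing of
`ℓ∞(X)` forward along `g` gives a reversible conical bicombing through `z`.
-/

universe u

/-- A metric space `Y` is injective if every `1`-Lipschitz map into `Y` defined on a subset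
of a metric space `B` extends to a `1`-Lipschitz map on all of `B`. -/
def IsInjectiveMetricSpace (Y : Type u) [MetricSpace Y] : Prop :=
  ∀ (B : Type u) [MetricSpace B] (A : Set B) (f : A → Y),
    LipschitzWith 1 f → ∃ g : B → Y, LipschitzWith 1 g ∧ ∀ a : A, g ↑a = f a

/-- An isometric embedding `e : X → E` into an injective metric space `E` is an injective hull
if every `1`-Lipschitz map `f : E → Z` such that `f ∘ e` is an isometric embedding is itself
an isometric embedding. -/
def IsInjectiveHull {X : Type u} {E : Type u} [MetricSpace X] [MetricSpace E] (e : X → E) :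
    Prop :=
  Isometry e ∧ IsInjectiveMetricSpace E ∧
    ∀ (Z : Type u) [MetricSpace Z] (f : E → Z),
      LipschitzWith 1 f → Isometry (f ∘ e) → Isometry f

open AffineMap Set
open scoped ENNReal

section Bicombing

variable {X : Type*} [MetricSpace X]

theorem dist_eq_abs_sub_mul_of_dist_le {γ : ℝ → X} {u v : X} (h0 : γ 0 = u) (h1 : γ 1 = v)
    (hγ : ∀ s s', dist (γ s) (γ s') ≤ |s - s'| * dist u v) :
    ∀ s ∈ Icc (0 : ℝ) 1, ∀ s' ∈ Icc (0 : ℝ) 1, dist (γ s) (γ s') = |s - s'| * dist u v := by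
  have key : ∀ s s', 0 ≤ s → s ≤ s' → s' ≤ 1 → dist (γ s) (γ s') = |s - s'| * dist u v := by
    intro s s' hs hss' hs'
    refine le_antisymm (hγ s s') ?_
    have hu : dist u (γ s) ≤ s * dist u v := by
      simpa [h0, abs_of_nonneg hs] using hγ 0 s
    have hv : dist (γ s') v ≤ (1 - s') * dist u v := by
      simpa [h1, abs_of_nonpos (sub_nonpos.2 hs')] using hγ s' 1
    rw [abs_of_nonpos (sub_nonpos.2 hss')]
    linarith [dist_triangle4 u (γ s) (γ s') v]
  intro s hs s' hs'
  rcases le_total s s' with h | h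
  · exact key s s' hs.1 h hs'.2
  · rw [dist_comm, abs_sub_comm]
    exact key s' s hs'.1 h hs.2

variable {V : Type*} [NormedAddCommGroup V] [NormedSpace ℝ V]

theorem dist_lineMap_lineMap_le (a b a' b' : V) {s : ℝ} (hs : s ∈ Icc (0 : ℝ) 1) :
    dist (lineMap a b s) (lineMap a' b' s) ≤ (1 - s) * dist a a' + s * dist b b' := by
  rw [lineMap_apply_module, lineMap_apply_module]
  refine (dist_add_add_le _ _ _ _).trans_eq ?_
  rw [dist_smul₀, dist_smul₀, Real.norm_of_nonneg (sub_nonneg.2 hs.2), Real.norm_of_nonneg hs.1]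

def retractionBicombing (e : X → V) (g : V → X) : X → X → ℝ → X :=
  fun u v s => g (lineMap (e u) (e v) s)

variable {e : X → V} {g : V → X}

theorem isGeodesicBicombing_retractionBicombing (he : Isometry e) (hg : LipschitzWith 1 g)
    (hge : ∀ u, g (e u) = u) : IsGeodesicBicombing (retractionBicombing e g) := by
  have h0 : ∀ u v, retractionBicombing e g u v 0 = u := by simp [retractionBicombing, hge]
  have h1 : ∀ u v, retractionBicombing e g u v 1 = v := by simp [retractionBicombing, hge]
  refine ⟨h0, h1, fun u v => dist_eq_abs_sub_mul_of_dist_le (h0 u v) (h1 u v) fun s s' => ?_⟩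
  calc dist (g (lineMap (e u) (e v) s)) (g (lineMap (e u) (e v) s'))
      ≤ dist (lineMap (e u) (e v) s) (lineMap (e u) (e v) s' : V) := by
        simpa using hg.dist_le_mul (lineMap (e u) (e v) s) (lineMap (e u) (e v) s')
    _ = |s - s'| * dist u v := by rw [dist_lineMap_lineMap, he.dist_eq, Real.dist_eq]

theorem isConical_retractionBicombing (he : Isometry e) (hg : LipschitzWith 1 g) :
    IsConical (retractionBicombing e g) := by
  intro u v u' v' s hs
  calc dist (g (lineMap (e u) (e v) s)) (g (lineMap (e u') (e v') s))
      ≤ dist (lineMap (e u) (e v) s) (lineMap (e u') (e v') s : V) := by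
        simpa using hg.dist_le_mul (lineMap (e u) (e v) s) (lineMap (e u') (e v') s)
    _ ≤ (1 - s) * dist u u' + s * dist v v' := by
        simpa only [he.dist_eq] using dist_lineMap_lineMap_le (e u) (e v) (e u') (e v') hs

theorem isReversible_retractionBicombing : IsReversible (retractionBicombing e g) :=
  fun u v s _ => by simp only [retractionBicombing, lineMap_apply_one_sub]

end Bicombing

theorem IsInjectiveMetricSpace.exists_lipschitz_retraction_apply_eq {X V : Type u} [MetricSpace X]
    [MetricSpace V] (hX : IsInjectiveMetricSpace X) {e : X → V} (he : Isometry e) {m : V} {z : X}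
    (hz : ∀ w, dist z w ≤ dist m (e w)) :
    ∃ g : V → X, LipschitzWith 1 g ∧ (∀ u, g (e u) = u) ∧ g m = z := by
  classical
  have : Nonempty X := ⟨z⟩
  let f : V → X := fun a => if a = m then z else Function.invFun e a
  have hfe : ∀ u, f (e u) = u := by
    intro u
    by_cases hu : e u = m
    · simpa [f, hu] using dist_le_zero.1 ((hz u).trans_eq (by rw [← hu, dist_self]))
    · simp [f, hu, Function.leftInverse_invFun he.injective u]
  have hfm : f m = z := if_pos rfl
  have hlip : LipschitzOnWith 1 f (insert m (range e)) := by
    have hb : ∀ a ∈ insert m (range e), ∀ u, dist (f a) (f (e u)) ≤ dist a (e u) := by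
      rintro a (rfl | ⟨v, rfl⟩) u
      · rw [hfm, hfe]
        exact hz u
      · rw [hfe, hfe, he.dist_eq]
    refine LipschitzOnWith.mk_one ?_
    rintro a ha b (rfl | ⟨u, rfl⟩)
    · rcases ha with rfl | ⟨u, rfl⟩
      · simp
      · rw [dist_comm, dist_comm (e u)]
        exact hb _ (mem_insert _ _) u
    · exact hb a ha u
  obtain ⟨g, hg, hgf⟩ := hX V _ _ hlip.to_restrict
  exact ⟨g, hg, fun u => (hgf ⟨e u, Or.inr ⟨u, rfl⟩⟩).trans (hfe u),
    (hgf ⟨m, Or.inl rfl⟩).trans hfm⟩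

section Embedding

variable {X : Type*} [MetricSpace X]

def lpDistEmbedding (x₀ u : X) : lp (fun _ : X => ℝ) ∞ :=
  ⟨fun w => dist u w - dist x₀ w, memℓp_infty ⟨dist u x₀, by
    rintro r ⟨w, rfl⟩
    simpa [Real.norm_eq_abs] using abs_dist_sub_le u x₀ w⟩⟩

@[simp]
theorem lpDistEmbedding_apply (x₀ u w : X) : lpDistEmbedding x₀ u w = dist u w - dist x₀ w :=
  rfl

theorem isometry_lpDistEmbedding (x₀ : X) : Isometry (lpDistEmbedding x₀) := by
  refine Isometry.of_dist_eq fun u v => le_antisymm ?_ ?_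
  · refine lp.norm_le_of_forall_le dist_nonneg fun w => ?_
    simpa [Real.norm_eq_abs, dist_comm u v] using abs_dist_sub_le v u w
  · simpa [dist_eq_norm] using lp.norm_apply_le_norm ENNReal.top_ne_zero
      (lpDistEmbedding x₀ u - lpDistEmbedding x₀ v) v

theorem le_dist_lineMap_lpDistEmbedding (x₀ x y w : X) (t : ℝ) :
    (1 - t) * dist x w + t * dist y w ≤
      dist (lineMap (lpDistEmbedding x₀ x) (lpDistEmbedding x₀ y) t) (lpDistEmbedding x₀ w) := by
  have hw : (lineMap (lpDistEmbedding x₀ x) (lpDistEmbedding x₀ y) t - lpDistEmbedding x₀ w) w =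
      (1 - t) * dist x w + t * dist y w := by
    simp only [lineMap_apply_module, lp.coeFn_sub, lp.coeFn_add, lp.coeFn_smul, Pi.sub_apply,
      Pi.add_apply, Pi.smul_apply, smul_eq_mul, lpDistEmbedding_apply, dist_self]
    ring
  rw [dist_eq_norm, ← hw]
  exact (Real.le_norm_self _).trans (lp.norm_apply_le_norm ENNReal.top_ne_zero _ w)

end Embedding

theorem doss_point_realized_by_reversible_conical_bicombing_general
    {X : Type u} [MetricSpace X] (hX : IsInjectiveMetricSpace X)
    (x y : X) (t : ℝ) (z : X)
    (hz : ∀ w : X, dist z w ≤ (1 - t) * dist x w + t * dist y w) :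
    ∃ σ : X → X → ℝ → X, IsGeodesicBicombing σ ∧ IsConical σ ∧ IsReversible σ ∧
      σ x y t = z := by
  let e := lpDistEmbedding x
  have he : Isometry e := isometry_lpDistEmbedding x
  obtain ⟨g, hg, hge, hgm⟩ :=
    hX.exists_lipschitz_retraction_apply_eq he (m := lineMap (e x) (e y) t) fun w => (hz w).trans (le_dist_lineMap_lpDistEmbedding x x y w t)
  exact ⟨retractionBicombing e g, isGeodesicBicombing_retractionBicombing he hg hge,
    isConical_retractionBicombing he hg, isReversible_retractionBicombing, hgm⟩

/-- **Lemma 3.4.** Let `X` be an injective metric space, `x, y ∈ X`, `t ∈ [0,1]`, and let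
`z` be a point of the Doss expectation of `(1-t)δ_x + tδ_y`, i.e.
`d(z,w) ≤ (1-t) d(x,w) + t d(y,w)` for all `w`. Then there is a reversible conical geodesic
bicombing `σ` on `X` with `σ x y t = z`. -/
theorem doss_point_realized_by_reversible_conical_bicombing
    {X : Type u} [MetricSpace X] (hX : IsInjectiveMetricSpace X)
    (x y : X) (t : ℝ) (ht : t ∈ Set.Icc (0:ℝ) 1) (z : X)
    (hz : ∀ w : X, dist z w ≤ (1 - t) * dist x w + t * dist y w) :
    ∃ σ : X → X → ℝ → X, IsGeodesicBicombing σ ∧ IsConical σ ∧ IsReversible σ ∧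
      σ x y t = z :=
  doss_point_realized_by_reversible_conical_bicombing_general hX x y t z hz
end

section
/- Let (X,d) be a proper metric space. Then: (1) every sequence (σ⁽ⁿ⁾)_{n≥1} of conical geodesic bicombings on X has a subsequence that converges, uniformly on every set of the form B × B × [0,1] with B ⊆ X bounded, to a conical geodesic bicombing on X; and (2) if a sequence of reversible conical geodesic bicombings on X converges pointwise to a conical geodesic bicombing σ, then σ is reversible. -/
/-!
Extending each bicombing constantly in `t` outside `[0, 1]` makes it a map on the proper space
`X × X × ℝ`. At `p = (x, y, t)` the geodesic and conical properties give the uniform modulus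
`d(σ p, σ q) ≤ (2 + d(x, y)) · d(p, q)` and confine `σ p` to the closed ball of radius
`d(x, y)` about `x`. Such a family is equicontinuous and pointwise relatively compact, so
Arzelà–Ascoli in the (metrizable) compact-open topology gives a subsequence converging uniformly
on compact sets, in particular on `B × B × [0, 1]` for bounded `B`. Being a conical geodesic
bicombing and being reversible are closed conditions on finitely many values, so they pass to
pointwise limits.
-/

open Filter Metric Set Topology Uniformity

theorem exists_subseq_tendstoUniformlyOn_of_equicontinuous
    {Y X : Type*} [TopologicalSpace Y] [WeaklyLocallyCompactSpace Y] [SigmaCompactSpace Y]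
    [UniformSpace X] [IsCountablyGenerated (𝓤 X)]
    {S : Set (Y → X)} (hS : IsCompact S) (hSeq : Equicontinuous ((↑) : S → Y → X))
    {f : ℕ → Y → X} (hf : ∀ n, f n ∈ S) :
    ∃ g ∈ S, ∃ φ : ℕ → ℕ, StrictMono φ ∧
      ∀ K, IsCompact K → TendstoUniformlyOn (fun n => f (φ n)) g atTop K := by
  have hcont : ∀ h ∈ S, Continuous h := fun h hh => hSeq.continuous ⟨h, hh⟩
  set S' : Set C(Y, X) := {F | ⇑F ∈ S}
  have himage : ContinuousMap.toFun '' S' = S := by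
    ext h
    exact ⟨by rintro ⟨F, hF, rfl⟩; exact hF, fun hh => ⟨⟨h, hcont h hh⟩, hh, rfl⟩⟩
  have hS' : IsCompact S' := ArzelaAscoli.isCompact_of_equicontinuous S' (himage ▸ hS)
    (hSeq.comp fun F : S' => ⟨F, F.2⟩)
  obtain ⟨G, hG, φ, hφ, hlim⟩ :=
    hS'.tendsto_subseq (x := fun n => ⟨f n, hcont _ (hf n)⟩) fun n => hf n
  exact ⟨G, hG, φ, hφ, ContinuousMap.tendsto_iff_forall_isCompact_tendstoUniformlyOn.1 hlim⟩

section DominatedMaps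

variable {Y X : Type*} [PseudoMetricSpace Y] [MetricSpace X]

def dominatedMaps (L : Y → ℝ) (c : Y → X) (r : Y → ℝ) : Set (Y → X) :=
  {f | (∀ p q, dist (f p) (f q) ≤ L p * dist p q) ∧ ∀ p, f p ∈ closedBall (c p) (r p)}

theorem isCompact_dominatedMaps [ProperSpace X] (L : Y → ℝ) (c : Y → X) (r : Y → ℝ) :
    IsCompact (dominatedMaps L c r) := by
  have hclosed : IsClosed {f : Y → X | ∀ p q, dist (f p) (f q) ≤ L p * dist p q} := by
    simp only [ofPred_forall]
    exact isClosed_iInter fun p => isClosed_iInter fun q =>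
      isClosed_le ((continuous_apply p).dist (continuous_apply q)) continuous_const
  have hpi : dominatedMaps L c r = (univ.pi fun p => closedBall (c p) (r p)) ∩
      {f | ∀ p q, dist (f p) (f q) ≤ L p * dist p q} := by
    ext f
    simp only [dominatedMaps, mem_inter_iff, mem_univ_pi, mem_ofPred_eq, and_comm]
  rw [hpi]
  exact (isCompact_univ_pi fun p => isCompact_closedBall (c p) (r p)).inter_right hclosed

theorem equicontinuous_dominatedMaps (L : Y → ℝ) (c : Y → X) (r : Y → ℝ) :
    Equicontinuous ((↑) : dominatedMaps L c r → Y → X) := fun p =>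
  equicontinuousAt_of_continuity_modulus (fun q => L p * dist p q)
    ((by fun_prop : Continuous fun q => L p * dist p q).tendsto' p 0 (by simp)) _
    (Eventually.of_forall fun q f => f.2.1 p q)

end DominatedMaps

section Bicombing

variable {X : Type*} {σ : X → X → ℝ → X}

noncomputable def bicombingIccExtend (σ : X → X → ℝ → X) (p : X × X × ℝ) : X :=
  σ p.1 p.2.1 (projIcc 0 1 zero_le_one p.2.2)

theorem bicombingIccExtend_of_mem {x y : X} {t : ℝ} (ht : t ∈ Icc (0:ℝ) 1) :
    bicombingIccExtend σ (x, y, t) = σ x y t := by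
  rw [bicombingIccExtend, projIcc_of_mem zero_le_one ht]

variable [MetricSpace X]

theorem IsGeodesicBicombing.dist_le_of_isConical (hg : IsGeodesicBicombing σ)
    (hc : IsConical σ) (x y x' y' : X) {s t : ℝ} (hs : s ∈ Icc (0:ℝ) 1)
    (ht : t ∈ Icc (0:ℝ) 1) :
    dist (σ x y s) (σ x' y' t) ≤ dist x x' + dist y y' + |s - t| * dist x y := by
  have hcon := hc x y x' y' t ht
  calc dist (σ x y s) (σ x' y' t) ≤ dist (σ x y s) (σ x y t) + dist (σ x y t) (σ x' y' t) :=
        dist_triangle _ _ _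
    _ ≤ |s - t| * dist x y + ((1 - t) * dist x x' + t * dist y y') :=
        add_le_add (hg.2.2 x y s hs t ht).le hcon
    _ ≤ dist x x' + dist y y' + |s - t| * dist x y := by
        nlinarith [ht.1, ht.2, dist_nonneg (x := x) (y := x'), dist_nonneg (x := y) (y := y')]

theorem IsGeodesicBicombing.dist_left_le (hg : IsGeodesicBicombing σ) (x y : X) {t : ℝ}
    (ht : t ∈ Icc (0:ℝ) 1) : dist (σ x y t) x ≤ dist x y := by
  calc dist (σ x y t) x = dist (σ x y t) (σ x y 0) := by rw [hg.1]
    _ = t * dist x y := by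
        rw [hg.2.2 x y t ht 0 ⟨le_rfl, zero_le_one⟩, sub_zero, abs_of_nonneg ht.1]
    _ ≤ dist x y := mul_le_of_le_one_left dist_nonneg ht.2

theorem IsGeodesicBicombing.bicombingIccExtend_mem_dominatedMaps (hg : IsGeodesicBicombing σ)
    (hc : IsConical σ) :
    bicombingIccExtend σ ∈
      dominatedMaps (fun p => 2 + dist p.1 p.2.1) Prod.fst (fun p => dist p.1 p.2.1) := by
  refine ⟨fun p q => ?_, fun p => mem_closedBall.2 (hg.dist_left_le _ _ (projIcc 0 1 _ _).2)⟩
  have h₁ : dist p.1 q.1 ≤ dist p q := le_max_left _ _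
  have h₂ : dist p.2.1 q.2.1 ≤ dist p q := (le_max_left _ _).trans (le_max_right _ _)
  have h₃ : dist (projIcc 0 1 zero_le_one p.2.2) (projIcc 0 1 zero_le_one q.2.2) ≤
      dist p q := by
    simpa using ((LipschitzWith.projIcc zero_le_one).comp
      (LipschitzWith.prod_snd.comp LipschitzWith.prod_snd)).dist_le_mul p q
  calc dist (bicombingIccExtend σ p) (bicombingIccExtend σ q)
      ≤ dist p.1 q.1 + dist p.2.1 q.2.1 + dist (projIcc 0 1 zero_le_one p.2.2)
          (projIcc 0 1 zero_le_one q.2.2) * dist p.1 p.2.1 :=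
        hg.dist_le_of_isConical hc _ _ _ _ (projIcc 0 1 _ _).2 (projIcc 0 1 _ _).2
    _ ≤ (2 + dist p.1 p.2.1) * dist p q := by
        linarith [mul_le_mul_of_nonneg_right h₃ (dist_nonneg (x := p.1) (y := p.2.1))]

theorem IsGeodesicBicombing.of_tendsto {ι : Type*} {l : Filter ι} [l.NeBot]
    {σs : ι → X → X → ℝ → X} (hσs : ∀ i, IsGeodesicBicombing (σs i))
    (hlim : ∀ x y, ∀ t ∈ Icc (0:ℝ) 1, Tendsto (fun i => σs i x y t) l (𝓝 (σ x y t))) :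
    IsGeodesicBicombing σ := by
  refine ⟨fun x y => ?_, fun x y => ?_, fun x y s hs t ht => ?_⟩
  · refine tendsto_nhds_unique (hlim x y 0 ⟨le_rfl, zero_le_one⟩) ?_
    simpa only [(hσs _).1 x y] using tendsto_const_nhds
  · refine tendsto_nhds_unique (hlim x y 1 ⟨zero_le_one, le_rfl⟩) ?_
    simpa only [(hσs _).2.1 x y] using tendsto_const_nhds
  · refine tendsto_nhds_unique ((hlim x y s hs).dist (hlim x y t ht)) ?_
    simpa only [(hσs _).2.2 x y s hs t ht] using tendsto_const_nhds

theorem IsConical.of_tendsto {ι : Type*} {l : Filter ι} [l.NeBot]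
    {σs : ι → X → X → ℝ → X} (hσs : ∀ i, IsConical (σs i))
    (hlim : ∀ x y, ∀ t ∈ Icc (0:ℝ) 1, Tendsto (fun i => σs i x y t) l (𝓝 (σ x y t))) :
    IsConical σ := fun x y x' y' t ht =>
  le_of_tendsto' ((hlim x y t ht).dist (hlim x' y' t ht)) fun i => hσs i x y x' y' t ht

theorem IsReversible.of_tendsto {ι : Type*} {l : Filter ι} [l.NeBot]
    {σs : ι → X → X → ℝ → X} (hσs : ∀ i, IsReversible (σs i))
    (hlim : ∀ x y, ∀ t ∈ Icc (0:ℝ) 1, Tendsto (fun i => σs i x y t) l (𝓝 (σ x y t))) :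
    IsReversible σ := fun x y t ht =>
  tendsto_nhds_unique ((hlim x y t ht).congr fun i => hσs i x y t ht)
    (hlim y x (1 - t) (Icc.mem_iff_one_sub_mem.1 ht))

end Bicombing

/-- **Lemma 4.1.** On a proper metric space: (1) every sequence of conical geodesic
bicombings has a subsequence converging, uniformly on `B × B × [0,1]` for every bounded
`B ⊆ X`, to a conical geodesic bicombing; (2) a pointwise limit (on `X × X × [0,1]`) of
reversible conical geodesic bicombings that is a conical geodesic bicombing is reversible. -/
theorem conical_bicombings_compact_and_reversible_closed
    {X : Type*} [MetricSpace X] [ProperSpace X] :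
    (∀ σseq : ℕ → X → X → ℝ → X,
      (∀ n, IsGeodesicBicombing (σseq n) ∧ IsConical (σseq n)) →
      ∃ φ : ℕ → ℕ, StrictMono φ ∧ ∃ σ : X → X → ℝ → X,
        IsGeodesicBicombing σ ∧ IsConical σ ∧
        ∀ B : Set X, Bornology.IsBounded B →
          TendstoUniformlyOn (fun n p => σseq (φ n) p.1 p.2.1 p.2.2)
            (fun p : X × X × ℝ => σ p.1 p.2.1 p.2.2) Filter.atTop
            (B ×ˢ B ×ˢ Set.Icc (0:ℝ) 1)) ∧
    (∀ (σseq : ℕ → X → X → ℝ → X) (σ : X → X → ℝ → X),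
      (∀ n, IsGeodesicBicombing (σseq n) ∧ IsConical (σseq n) ∧ IsReversible (σseq n)) →
      IsGeodesicBicombing σ → IsConical σ →
      (∀ x y : X, ∀ t ∈ Set.Icc (0:ℝ) 1,
        Filter.Tendsto (fun n => σseq n x y t) Filter.atTop (nhds (σ x y t))) →
      IsReversible σ) := by
  refine ⟨fun σs hσs => ?_, fun σs σ hσs _ _ hlim =>
    IsReversible.of_tendsto (fun n => (hσs n).2.2) hlim⟩
  obtain ⟨g, -, φ, hφ, hunif⟩ := exists_subseq_tendstoUniformlyOn_of_equicontinuous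
    (isCompact_dominatedMaps _ _ _) (equicontinuous_dominatedMaps _ _ _)
    fun n => IsGeodesicBicombing.bicombingIccExtend_mem_dominatedMaps (hσs n).1 (hσs n).2
  set σ : X → X → ℝ → X := fun x y t => g (x, y, t)
  have hlim : ∀ x y, ∀ t ∈ Icc (0:ℝ) 1,
      Tendsto (fun n => σs (φ n) x y t) atTop (𝓝 (σ x y t)) := fun x y t ht => by
    simpa only [bicombingIccExtend_of_mem ht] using
      (hunif {(x, y, t)} isCompact_singleton).tendsto_at rfl
  refine ⟨φ, hφ, σ, .of_tendsto (fun n => (hσs (φ n)).1) hlim,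
    .of_tendsto (fun n => (hσs (φ n)).2) hlim, fun B hB => ?_⟩
  have hK : IsCompact (closure B ×ˢ closure B ×ˢ Icc (0:ℝ) 1) :=
    hB.isCompact_closure.prod (hB.isCompact_closure.prod isCompact_Icc)
  refine ((hunif _ hK).mono (prod_mono subset_closure (prod_mono subset_closure subset_rfl))).congr
    (Eventually.of_forall fun n p hp => ?_)
  exact bicombingIccExtend_of_mem hp.2.2
end

section
/- Let (X,d) be a metric space admitting a conical geodesic bicombing φ, and fix a base point o ∈ X. For conical geodesic bicombings σ, τ on X and t ∈ [0,1], define Φ(σ,τ,t) : X × X × [0,1] → X by Φ(σ,τ,t)(x,y,s) = φ(σ(x,y,s), τ(x,y,s), t). Then: (1) for each pair of conical geodesic bicombings σ, τ on X and each t ∈ [0,1], the map Φ(σ,τ,t) is a conical geodesic bicombing on X; (2) Φ is a conical geodesic bicombing on the set CBI(X) of all conical geodesic bicombings on X equipped with the metric D_o(σ,τ) = sup{ 3^{−k} · d(σ(x,y,t), τ(x,y,t)) : k ≥ 0, x,y ∈ B_{2^k}(o), t ∈ [0,1] }; and (3) if σ and τ are reversible, then Φ(σ,τ,t) is reversible for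 every t ∈ [0,1]. -/
/-- The metric `D_o` on the set of conical bicombings:
`D_o σ τ = sup { 3⁻ᵏ * dist (σ x y t) (τ x y t) : k ≥ 0, x, y ∈ B_{2^k}(o), t ∈ [0,1] }`. -/
noncomputable def Do {X : Type*} [MetricSpace X] (o : X) (σ τ : X → X → ℝ → X) : ℝ :=
  sSup {r : ℝ | ∃ (k : ℕ) (x y : X) (t : ℝ), x ∈ Metric.closedBall o (2 ^ k) ∧
    y ∈ Metric.closedBall o (2 ^ k) ∧ t ∈ Set.Icc (0:ℝ) 1 ∧
    r = ((3:ℝ) ^ k)⁻¹ * dist (σ x y t) (τ x y t)}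

/-- The interpolation map `Φ(σ, τ, t)(x, y, s) = φ(σ x y s, τ x y s, t)`. -/
def Phi {X : Type*} [MetricSpace X] (φ : X → X → ℝ → X)
    (σ τ : X → X → ℝ → X) (t : ℝ) : X → X → ℝ → X :=
  fun x y s => φ (σ x y s) (τ x y s) t

/-!
Everything is checked pointwise. Conicality of `φ` bounds the `Φ(σ, τ, t)`-curve from `x` to
`y` by `|a - b| · d(x, y)`, and a curve with these endpoints and this Lipschitz bound is a
geodesic by the triangle inequality; conicality of `Φ(σ, τ, t)` is the convex combination of those
of `σ` and `τ`. For `D_o`, the geodesic property of `φ` makes each term in the supremum for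
`Φ(σ, τ, s), Φ(σ, τ, t)` exactly `|s - t|` times the term for `σ, τ`, while the conicality of `φ`
bounds each term for `Φ(σ, τ, t), Φ(σ', τ', t)`.
-/

namespace IsGeodesicBicombing

variable {X : Type*} [MetricSpace X] {σ : X → X → ℝ → X}

lemma apply_self (hσ : IsGeodesicBicombing σ) (x : X) {t : ℝ} (ht : t ∈ Set.Icc (0:ℝ) 1) :
    σ x x t = x := by
  simpa [hσ.1] using hσ.2.2 x x t ht 0 ⟨le_rfl, zero_le_one⟩

lemma dist_left_apply (hσ : IsGeodesicBicombing σ) (x y : X) {t : ℝ}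
    (ht : t ∈ Set.Icc (0:ℝ) 1) : dist x (σ x y t) = t * dist x y := by
  simpa [hσ.1, dist_comm, abs_of_nonneg ht.1] using hσ.2.2 x y t ht 0 ⟨le_rfl, zero_le_one⟩

lemma dist_apply_apply_le {τ : X → X → ℝ → X} (hσ : IsGeodesicBicombing σ)
    (hτ : IsGeodesicBicombing τ) (x y : X) {t : ℝ} (ht : t ∈ Set.Icc (0:ℝ) 1) :
    dist (σ x y t) (τ x y t) ≤ 2 * dist x y := by
  have hσx := hσ.dist_left_apply x y ht
  have hτx := hτ.dist_left_apply x y ht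
  have := dist_triangle_left (σ x y t) (τ x y t) x
  nlinarith [dist_nonneg (x := x) (y := y), ht.2]

end IsGeodesicBicombing

/-- Any shortfall on `[a, b]` would break the triangle inequality `x → f a → f b → y`. -/
lemma dist_eq_of_dist_le_of_endpoints {X : Type*} [MetricSpace X] {f : ℝ → X} {x y : X}
    (hf0 : f 0 = x) (hf1 : f 1 = y)
    (hf : ∀ a ∈ Set.Icc (0:ℝ) 1, ∀ b ∈ Set.Icc (0:ℝ) 1, dist (f a) (f b) ≤ |a - b| * dist x y)
    (a : ℝ) (ha : a ∈ Set.Icc (0:ℝ) 1) (b : ℝ) (hb : b ∈ Set.Icc (0:ℝ) 1) :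
    dist (f a) (f b) = |a - b| * dist x y := by
  wlog hab : a ≤ b generalizing a b
  · rw [dist_comm, abs_sub_comm]
    exact this b hb a ha (le_of_not_ge hab)
  refine le_antisymm (hf a ha b hb) ?_
  have hxa := hf 0 ⟨le_rfl, zero_le_one⟩ a ha
  have hby := hf b hb 1 ⟨zero_le_one, le_rfl⟩
  rw [hf0, zero_sub, abs_neg, abs_of_nonneg ha.1] at hxa
  rw [hf1, abs_sub_comm, abs_of_nonneg (sub_nonneg.2 hb.2)] at hby
  rw [abs_sub_comm, abs_of_nonneg (sub_nonneg.2 hab)]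
  nlinarith [dist_triangle4 x (f a) (f b) y]

section Phi

variable {X : Type*} [MetricSpace X] {φ σ τ : X → X → ℝ → X}

lemma Phi_zero (hφ : IsGeodesicBicombing φ) : Phi φ σ τ 0 = σ := by
  funext x y s
  exact hφ.1 _ _

lemma Phi_one (hφ : IsGeodesicBicombing φ) : Phi φ σ τ 1 = τ := by
  funext x y s
  exact hφ.2.1 _ _

lemma isGeodesicBicombing_Phi (hφg : IsGeodesicBicombing φ) (hφc : IsConical φ)
    (hσ : IsGeodesicBicombing σ) (hτ : IsGeodesicBicombing τ) {t : ℝ}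
    (ht : t ∈ Set.Icc (0:ℝ) 1) : IsGeodesicBicombing (Phi φ σ τ t) := by
  have h0 (x y : X) : Phi φ σ τ t x y 0 = x := by
    simp only [Phi, hσ.1, hτ.1, hφg.apply_self x ht]
  have h1 (x y : X) : Phi φ σ τ t x y 1 = y := by
    simp only [Phi, hσ.2.1, hτ.2.1, hφg.apply_self y ht]
  refine ⟨h0, h1, fun x y => dist_eq_of_dist_le_of_endpoints (h0 x y) (h1 x y) ?_⟩
  intro a ha b hb
  calc dist (Phi φ σ τ t x y a) (Phi φ σ τ t x y b)
      ≤ (1 - t) * dist (σ x y a) (σ x y b) + t * dist (τ x y a) (τ x y b) :=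
        hφc _ _ _ _ t ht
    _ = |a - b| * dist x y := by
        rw [hσ.2.2 x y a ha b hb, hτ.2.2 x y a ha b hb]; ring

lemma isConical_Phi (hφ : IsConical φ) (hσ : IsConical σ) (hτ : IsConical τ) {t : ℝ}
    (ht : t ∈ Set.Icc (0:ℝ) 1) : IsConical (Phi φ σ τ t) := by
  intro x y x' y' s hs
  calc dist (Phi φ σ τ t x y s) (Phi φ σ τ t x' y' s)
      ≤ (1 - t) * dist (σ x y s) (σ x' y' s) + t * dist (τ x y s) (τ x' y' s) :=
        hφ _ _ _ _ t ht
    _ ≤ (1 - t) * ((1 - s) * dist x x' + s * dist y y') +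
          t * ((1 - s) * dist x x' + s * dist y y') := by
        gcongr
        · linarith [ht.2]
        · exact hσ x y x' y' s hs
        · exact ht.1
        · exact hτ x y x' y' s hs
    _ = (1 - s) * dist x x' + s * dist y y' := by ring

lemma isReversible_Phi (hσ : IsReversible σ) (hτ : IsReversible τ) (t : ℝ) :
    IsReversible (Phi φ σ τ t) := by
  intro x y s hs
  simp only [Phi, hσ x y s hs, hτ x y s hs]

end Phi

section Do

variable {X : Type*} [MetricSpace X] (o : X)

def DoSet (σ τ : X → X → ℝ → X) : Set ℝ :=
  {r : ℝ | ∃ (k : ℕ) (x y : X) (t : ℝ), x ∈ Metric.closedBall o (2 ^ k) ∧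
    y ∈ Metric.closedBall o (2 ^ k) ∧ t ∈ Set.Icc (0:ℝ) 1 ∧
    r = ((3:ℝ) ^ k)⁻¹ * dist (σ x y t) (τ x y t)}

lemma Do_eq_sSup_DoSet (σ τ : X → X → ℝ → X) : Do o σ τ = sSup (DoSet o σ τ) := rfl

lemma DoSet_nonempty (σ τ : X → X → ℝ → X) : (DoSet o σ τ).Nonempty :=
  ⟨_, 0, o, o, 0, by simp, by simp, ⟨le_rfl, zero_le_one⟩, rfl⟩

/-- Points of `B_{2^k}(o)` are at distance at most `2^(k+1)`, so each term of `DoSet` is at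
most `4 * (2/3)^k ≤ 4`. -/
lemma DoSet_bddAbove {σ τ : X → X → ℝ → X} (hσ : IsGeodesicBicombing σ)
    (hτ : IsGeodesicBicombing τ) : BddAbove (DoSet o σ τ) := by
  refine ⟨4, ?_⟩
  rintro r ⟨k, x, y, t, hx, hy, ht, rfl⟩
  have hxy : dist x y ≤ 2 * 3 ^ k := by
    have := dist_triangle_right x y o
    have : (2:ℝ) ^ k ≤ 3 ^ k := pow_le_pow_left₀ (by norm_num) (by norm_num) k
    linarith [Metric.mem_closedBall.1 hx, Metric.mem_closedBall.1 hy]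
  rw [inv_mul_le_iff₀ (by positivity)]
  linarith [hσ.dist_apply_apply_le hτ x y ht]

variable {o}

lemma le_Do {σ τ : X → X → ℝ → X} (hσ : IsGeodesicBicombing σ) (hτ : IsGeodesicBicombing τ)
    {k : ℕ} {x y : X} (hx : x ∈ Metric.closedBall o (2 ^ k))
    (hy : y ∈ Metric.closedBall o (2 ^ k)) {t : ℝ} (ht : t ∈ Set.Icc (0:ℝ) 1) :
    ((3:ℝ) ^ k)⁻¹ * dist (σ x y t) (τ x y t) ≤ Do o σ τ :=
  le_csSup (DoSet_bddAbove o hσ hτ) ⟨k, x, y, t, hx, hy, ht, rfl⟩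

variable {φ : X → X → ℝ → X}

open scoped Pointwise in
lemma DoSet_Phi_Phi (hφ : IsGeodesicBicombing φ) (σ τ : X → X → ℝ → X) {s t : ℝ}
    (hs : s ∈ Set.Icc (0:ℝ) 1) (ht : t ∈ Set.Icc (0:ℝ) 1) :
    DoSet o (Phi φ σ τ s) (Phi φ σ τ t) = |s - t| • DoSet o σ τ := by
  have hterm (k : ℕ) (x y : X) (u : ℝ) :
      ((3:ℝ) ^ k)⁻¹ * dist (Phi φ σ τ s x y u) (Phi φ σ τ t x y u) =
        |s - t| • (((3:ℝ) ^ k)⁻¹ * dist (σ x y u) (τ x y u)) := by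
    simp only [Phi, hφ.2.2 _ _ s hs t ht, smul_eq_mul]; ring
  ext r
  simp only [DoSet, Set.mem_smul_set, Set.mem_ofPred_eq]
  constructor
  · rintro ⟨k, x, y, u, hx, hy, hu, rfl⟩
    exact ⟨_, ⟨k, x, y, u, hx, hy, hu, rfl⟩, (hterm k x y u).symm⟩
  · rintro ⟨_, ⟨k, x, y, u, hx, hy, hu, rfl⟩, rfl⟩
    exact ⟨k, x, y, u, hx, hy, hu, (hterm k x y u).symm⟩

open scoped Pointwise in
lemma Do_Phi_Phi (hφ : IsGeodesicBicombing φ) (σ τ : X → X → ℝ → X) {s t : ℝ}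
    (hs : s ∈ Set.Icc (0:ℝ) 1) (ht : t ∈ Set.Icc (0:ℝ) 1) :
    Do o (Phi φ σ τ s) (Phi φ σ τ t) = |s - t| * Do o σ τ := by
  rw [Do_eq_sSup_DoSet, DoSet_Phi_Phi hφ σ τ hs ht, Real.sSup_smul_of_nonneg (abs_nonneg _)]
  rfl

lemma Do_Phi_le {σ τ σ' τ' : X → X → ℝ → X} (hφ : IsConical φ) (hσ : IsGeodesicBicombing σ)
    (hτ : IsGeodesicBicombing τ) (hσ' : IsGeodesicBicombing σ') (hτ' : IsGeodesicBicombing τ')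
    {t : ℝ} (ht : t ∈ Set.Icc (0:ℝ) 1) :
    Do o (Phi φ σ τ t) (Phi φ σ' τ' t) ≤ (1 - t) * Do o σ σ' + t * Do o τ τ' := by
  refine csSup_le (DoSet_nonempty o _ _) ?_
  rintro _ ⟨k, x, y, u, hx, hy, hu, rfl⟩
  calc ((3:ℝ) ^ k)⁻¹ * dist (Phi φ σ τ t x y u) (Phi φ σ' τ' t x y u)
      ≤ ((3:ℝ) ^ k)⁻¹ *
          ((1 - t) * dist (σ x y u) (σ' x y u) + t * dist (τ x y u) (τ' x y u)) := by
        gcongr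
        exact hφ _ _ _ _ t ht
    _ = (1 - t) * (((3:ℝ) ^ k)⁻¹ * dist (σ x y u) (σ' x y u)) +
          t * (((3:ℝ) ^ k)⁻¹ * dist (τ x y u) (τ' x y u)) := by ring
    _ ≤ (1 - t) * Do o σ σ' + t * Do o τ τ' := by
        gcongr
        · linarith [ht.2]
        · exact le_Do hσ hσ' hx hy hu
        · exact ht.1
        · exact le_Do hτ hτ' hx hy hu

end Do

/-- **Lemma 4.2.** If `φ` is a conical geodesic bicombing on `X` and `o ∈ X`, then:
(1) `Φ(σ, τ, t)` is a conical geodesic bicombing for all conical geodesic bicombings `σ, τ`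
and `t ∈ [0,1]`; (2) `Φ` is a conical geodesic bicombing on the set of conical geodesic
bicombings equipped with the metric `D_o`; (3) if `σ` and `τ` are reversible, so is
`Φ(σ, τ, t)` for every `t ∈ [0,1]`. -/
theorem Phi_is_conical_bicombing_on_CBI
    {X : Type*} [MetricSpace X] (o : X) (φ : X → X → ℝ → X)
    (hφgeo : IsGeodesicBicombing φ) (hφcon : IsConical φ) :
    -- (1) each `Φ(σ, τ, t)` is a conical geodesic bicombing
    (∀ σ τ : X → X → ℝ → X, IsGeodesicBicombing σ → IsConical σ →
      IsGeodesicBicombing τ → IsConical τ → ∀ t ∈ Set.Icc (0:ℝ) 1,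
        IsGeodesicBicombing (Phi φ σ τ t) ∧ IsConical (Phi φ σ τ t)) ∧
    -- (2) `Φ` is a geodesic bicombing for `D_o` ...
    (∀ σ τ : X → X → ℝ → X, IsGeodesicBicombing σ → IsConical σ →
      IsGeodesicBicombing τ → IsConical τ →
        Phi φ σ τ 0 = σ ∧ Phi φ σ τ 1 = τ ∧
        ∀ s ∈ Set.Icc (0:ℝ) 1, ∀ t ∈ Set.Icc (0:ℝ) 1,
          Do o (Phi φ σ τ s) (Phi φ σ τ t) = |s - t| * Do o σ τ) ∧
    -- ... which is conical for `D_o`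
    (∀ σ τ σ' τ' : X → X → ℝ → X, IsGeodesicBicombing σ → IsConical σ →
      IsGeodesicBicombing τ → IsConical τ → IsGeodesicBicombing σ' → IsConical σ' →
      IsGeodesicBicombing τ' → IsConical τ' → ∀ t ∈ Set.Icc (0:ℝ) 1,
        Do o (Phi φ σ τ t) (Phi φ σ' τ' t) ≤ (1 - t) * Do o σ σ' + t * Do o τ τ') ∧
    -- (3) reversibility is preserved
    (∀ σ τ : X → X → ℝ → X, IsGeodesicBicombing σ → IsConical σ → IsReversible σ →
      IsGeodesicBicombing τ → IsConical τ → IsReversible τ →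
        ∀ t ∈ Set.Icc (0:ℝ) 1, IsReversible (Phi φ σ τ t)) := by
  refine ⟨?_, ?_, ?_, ?_⟩
  · intro σ τ hσg hσc hτg hτc t ht
    exact ⟨isGeodesicBicombing_Phi hφgeo hφcon hσg hτg ht, isConical_Phi hφcon hσc hτc ht⟩
  · intro σ τ _ _ _ _
    exact ⟨Phi_zero hφgeo, Phi_one hφgeo, fun s hs t ht => Do_Phi_Phi hφgeo σ τ hs ht⟩
  · intro σ τ σ' τ' hσg _ hτg _ hσ'g _ hτ'g _ t ht
    exact Do_Phi_le hφcon hσg hτg hσ'g hτ'g ht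
  · intro σ τ _ _ hσr _ _ hτr t _
    exact isReversible_Phi hσr hτr t
end

section
/- Let (X,d) be a nonempty compact metric space admitting a conical geodesic bicombing, and let S be a nonempty set of 1-Lipschitz self-maps of X that is closed under composition and left reversible, i.e. for all a, b ∈ S there exist c, d ∈ S with a ∘ c = b ∘ d. Then there exists a point x⋆ ∈ X such that f(x⋆) = x⋆ for all f ∈ S. -/
/-!
By Zorn's lemma and compactness there is a minimal nonempty closed `σ`-convex `S`-invariant set
`K`. Left reversibility makes the images `a '' K`, `a ∈ S`, a directed family of compact sets, so
their intersection `Ω` is nonempty and compact, and every `f ∈ S` maps `Ω` onto itself. Hence for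
each `r` the set of centres `w` with `Ω ⊆ closedBall w r` is closed, `σ`-convex (conicality) and
`S`-invariant (`f` is `1`-Lipschitz and onto `Ω`), so by minimality it contains `K` as soon as it
meets `K`. If `Ω` had diameter `ρ > 0`, averaging an `n`-point `ρ / 2`-net of `Ω` along `σ` would
give a point of `K` within `ρ - ρ / (2 n)` of all of `Ω`; every point of `Ω ⊆ K` would then be
such a centre, forcing `diam Ω < ρ`. So `Ω` is a single point, and it is fixed by all of `S`.
-/

open Set Metric Finset Function

section

variable {X : Type*}

theorem nonempty_biInter_of_directedOn [TopologicalSpace X] [CompactSpace X] {ι : Type*}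
    {S : Set ι} {F : ι → Set X} (hS : S.Nonempty) (hdir : DirectedOn ((· ⊇ ·) on F) S)
    (hne : ∀ i ∈ S, (F i).Nonempty) (hcl : ∀ i ∈ S, IsClosed (F i)) :
    (⋂ i ∈ S, F i).Nonempty := by
  have := hS.to_subtype
  rw [biInter_eq_iInter]
  exact IsCompact.nonempty_iInter_of_directed_nonempty_isCompact_isClosed _ hdir.directed_val
    (fun i => hne i i.2) (fun i => (hcl i i.2).isCompact) fun i => hcl i i.2

section LeftReversible

variable {S : Set (X → X)} {K : Set X}

theorem directedOn_image_of_leftReversible (hcomp : ∀ f ∈ S, ∀ g ∈ S, f ∘ g ∈ S)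
    (hrev : ∀ a ∈ S, ∀ b ∈ S, ∃ c ∈ S, ∃ d ∈ S, a ∘ c = b ∘ d) (hK : ∀ f ∈ S, MapsTo f K K) :
    DirectedOn ((· ⊇ ·) on (· '' K)) S := by
  intro a ha b hb
  obtain ⟨c, hc, d, hd, hcd⟩ := hrev a ha b hb
  refine ⟨a ∘ c, hcomp a ha c hc, ?_, ?_⟩
  · exact (image_comp a c K).trans_subset (image_mono (hK c hc).image_subset)
  · rw [Function.onFun, hcd]
    exact (image_comp b d K).trans_subset (image_mono (hK d hd).image_subset)

theorem mapsTo_biInter_image_of_leftReversible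
    (hrev : ∀ a ∈ S, ∀ b ∈ S, ∃ c ∈ S, ∃ d ∈ S, a ∘ c = b ∘ d) (hK : ∀ f ∈ S, MapsTo f K K)
    {f : X → X} (hf : f ∈ S) : MapsTo f (⋂ a ∈ S, a '' K) (⋂ a ∈ S, a '' K) := by
  intro z hz
  refine mem_iInter₂.2 fun b hb => ?_
  obtain ⟨c, hc, d, hd, hcd⟩ := hrev f hf b hb
  obtain ⟨u, hu, rfl⟩ := mem_iInter₂.1 hz c hc
  exact ⟨d u, hK d hd hu, (congrFun hcd u).symm⟩

theorem surjOn_biInter_image_of_leftReversible [TopologicalSpace X] [T2Space X] [CompactSpace X]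
    (hcont : ∀ f ∈ S, Continuous f) (hcomp : ∀ f ∈ S, ∀ g ∈ S, f ∘ g ∈ S)
    (hrev : ∀ a ∈ S, ∀ b ∈ S, ∃ c ∈ S, ∃ d ∈ S, a ∘ c = b ∘ d) (hK : ∀ f ∈ S, MapsTo f K K)
    (hKcl : IsClosed K) {f : X → X} (hf : f ∈ S) :
    SurjOn f (⋂ a ∈ S, a '' K) (⋂ a ∈ S, a '' K) := by
  intro z hz
  have hdir : DirectedOn ((· ⊇ ·) on fun a => a '' K ∩ f ⁻¹' {z}) S := fun a ha b hb =>
    let ⟨c, hc, hca, hcb⟩ := directedOn_image_of_leftReversible hcomp hrev hK a ha b hb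
    ⟨c, hc, inter_subset_inter_left _ hca, inter_subset_inter_left _ hcb⟩
  have hne (a : X → X) (ha : a ∈ S) : (a '' K ∩ f ⁻¹' {z}).Nonempty := by
    obtain ⟨u, hu, hfu⟩ := mem_iInter₂.1 hz (f ∘ a) (hcomp f hf a ha)
    exact ⟨a u, mem_image_of_mem a hu, hfu⟩
  have hcl (a : X → X) (ha : a ∈ S) : IsClosed (a '' K ∩ f ⁻¹' {z}) :=
    ((hKcl.isCompact.image (hcont a ha)).isClosed).inter
      (isClosed_singleton.preimage (hcont f hf))
  obtain ⟨w, hw⟩ := nonempty_biInter_of_directedOn ⟨f, hf⟩ hdir hne hcl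
  simp only [mem_iInter₂] at hw
  exact ⟨w, mem_iInter₂.2 fun a ha => (hw a ha).1, (hw f hf).2⟩

theorem nonempty_biInter_image_of_leftReversible [TopologicalSpace X] [T2Space X]
    [CompactSpace X]
    (hS : S.Nonempty) (hcont : ∀ f ∈ S, Continuous f) (hcomp : ∀ f ∈ S, ∀ g ∈ S, f ∘ g ∈ S)
    (hrev : ∀ a ∈ S, ∀ b ∈ S, ∃ c ∈ S, ∃ d ∈ S, a ∘ c = b ∘ d) (hK : ∀ f ∈ S, MapsTo f K K)
    (hKcl : IsClosed K) (hKne : K.Nonempty) : (⋂ a ∈ S, a '' K).Nonempty :=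
  nonempty_biInter_of_directedOn hS (directedOn_image_of_leftReversible hcomp hrev hK)
    (fun _ _ => hKne.image _) fun a ha => (hKcl.isCompact.image (hcont a ha)).isClosed

end LeftReversible

theorem exists_minimal_nonempty_of_forall_sInter [TopologicalSpace X] [CompactSpace X]
    [Nonempty X] {P : Set X → Prop} (hP : ∀ 𝒞 : Set (Set X), (∀ K ∈ 𝒞, P K) → P (⋂₀ 𝒞))
    (hcl : ∀ K, P K → IsClosed K) : ∃ K, Minimal (fun K => K.Nonempty ∧ P K) K := by
  have hchain (𝒞) (h𝒞 : 𝒞 ⊆ {K | K.Nonempty ∧ P K}) (h𝒞chain : IsChain (· ⊆ ·) 𝒞)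
      (hne : 𝒞.Nonempty) : ∃ L ∈ {K | K.Nonempty ∧ P K}, ∀ K ∈ 𝒞, L ⊆ K := by
    have := hne.to_subtype
    refine ⟨⋂₀ 𝒞, ⟨?_, hP 𝒞 fun K hK => (h𝒞 hK).2⟩, fun K hK => sInter_subset_of_mem hK⟩
    exact IsCompact.nonempty_sInter_of_directed_nonempty_isCompact_isClosed
      (IsChain.directedOn (r := fun K L : Set X => K ⊇ L) h𝒞chain.symm) (fun K hK => (h𝒞 hK).1)
      (fun K hK => (hcl K (h𝒞 hK).2).isCompact) fun K hK => hcl K (h𝒞 hK).2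
  obtain ⟨K, -, hK⟩ := zorn_superset_nonempty _ hchain univ
    ⟨univ_nonempty, by simpa using hP ∅ (by simp)⟩
  exact ⟨K, hK⟩

section MetricSpace

variable [MetricSpace X]

theorem IsGeodesicBicombing.apply_self_s16 {σ : X → X → ℝ → X} (hb : IsGeodesicBicombing σ)
    (z : X) {t : ℝ} (ht : t ∈ Icc (0 : ℝ) 1) : σ z z t = z := by
  have h := hb.2.2 z z t ht 0 ⟨le_rfl, zero_le_one⟩
  rwa [hb.1, dist_self, mul_zero, dist_eq_zero] at h

theorem IsConical.dist_le {σ : X → X → ℝ → X} (hc : IsConical σ) (hb : IsGeodesicBicombing σ)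
    (x y w : X) {t : ℝ} (ht : t ∈ Icc (0 : ℝ) 1) :
    dist (σ x y t) w ≤ (1 - t) * dist x w + t * dist y w := by
  simpa only [hb.apply_self_s16 w ht] using hc x y w w t ht

def BicombingConvex (σ : X → X → ℝ → X) (K : Set X) : Prop :=
  ∀ x ∈ K, ∀ y ∈ K, ∀ t ∈ Icc (0 : ℝ) 1, σ x y t ∈ K

theorem BicombingConvex.exists_mem_dist_mul_card_le_sum {σ : X → X → ℝ → X} {K : Set X}
    (hK : BicombingConvex σ K) (hb : IsGeodesicBicombing σ) (hc : IsConical σ)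
    {s : Finset X} (hs : s.Nonempty) (hsK : ↑s ⊆ K) :
    ∃ u ∈ K, ∀ w, dist u w * (#s : ℝ) ≤ ∑ z ∈ s, dist z w := by
  induction hs using Finset.Nonempty.cons_induction with
  | singleton a => exact ⟨a, hsK (by simp), fun w => by simp⟩
  | cons a s ha hs ih =>
    rw [coe_cons, insert_subset_iff] at hsK
    obtain ⟨u, huK, hu⟩ := ih hsK.2
    set n : ℝ := (#s : ℝ)
    have hn : 0 < n := by simpa [n] using hs.card_pos
    have ht : n / (n + 1) ∈ Icc (0 : ℝ) 1 :=
      ⟨by positivity, (div_le_one (by positivity)).2 (by linarith)⟩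
    refine ⟨σ a u (n / (n + 1)), hK a hsK.1 u huK _ ht, fun w => ?_⟩
    have hmix := hc.dist_le hb a u w ht
    rw [card_cons, sum_cons, Nat.cast_succ]
    calc dist (σ a u (n / (n + 1))) w * (n + 1)
        ≤ ((1 - n / (n + 1)) * dist a w + n / (n + 1) * dist u w) * (n + 1) := by gcongr
      _ = dist a w + dist u w * n := by field_simp; ring
      _ ≤ dist a w + ∑ z ∈ s, dist z w := by gcongr; exact hu w

theorem BicombingConvex.exists_subset_closedBall_lt_diam {σ : X → X → ℝ → X} {K Ω : Set X}
    (hK : BicombingConvex σ K) (hb : IsGeodesicBicombing σ) (hc : IsConical σ)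
    (hΩK : Ω ⊆ K) (hΩ : IsCompact Ω) (hpos : 0 < diam Ω) :
    ∃ u ∈ K, ∃ c < diam Ω, Ω ⊆ closedBall u c := by
  classical
  set ρ := diam Ω
  obtain ⟨s, hsΩ, hcover⟩ :=
    hΩ.elim_nhds_subcover (fun z => ball z (ρ / 2)) fun z _ => ball_mem_nhds z (by positivity)
  have hnear : ∀ y ∈ Ω, ∃ j ∈ s, dist j y < ρ / 2 := fun y hy => by
    simpa [dist_comm] using hcover hy
  obtain ⟨y₀, hy₀⟩ : Ω.Nonempty := nonempty_iff_ne_empty.2 fun h => by simp [ρ, h] at hpos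
  have hs : s.Nonempty := let ⟨j, hj, _⟩ := hnear y₀ hy₀; ⟨j, hj⟩
  obtain ⟨u, huK, hu⟩ := hK.exists_mem_dist_mul_card_le_sum hb hc hs fun z hz => hΩK (hsΩ z hz)
  set n : ℝ := (#s : ℝ)
  have hn : 0 < n := by simpa [n] using hs.card_pos
  refine ⟨u, huK, ρ - ρ / (2 * n), by linarith [show 0 < ρ / (2 * n) by positivity],
    fun y hy => ?_⟩
  obtain ⟨j, hj, hjy⟩ := hnear y hy
  -- all points of the net are within `ρ` of `y`, and one of them within `ρ / 2`
  have hsum : ∑ z ∈ s, dist z y ≤ n * ρ - ρ / 2 := by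
    have hrest := sum_le_card_nsmul (s.erase j) (fun z => dist z y) ρ fun z hz =>
      dist_le_diam_of_mem hΩ.isBounded (hsΩ z (mem_of_mem_erase hz)) hy
    have hcard : (#(s.erase j) : ℝ) = n - 1 := by
      rw [eq_sub_iff_add_eq, ← Nat.cast_add_one, card_erase_add_one hj]
    rw [nsmul_eq_mul, hcard] at hrest
    rw [← add_sum_erase s _ hj]
    linarith
  rw [mem_closedBall_comm, mem_closedBall]
  calc dist u y ≤ (n * ρ - ρ / 2) / n := (le_div_iff₀ hn).2 ((hu y).trans hsum)
    _ = ρ - ρ / (2 * n) := by field_simp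

def IsClosedInvariantConvex (σ : X → X → ℝ → X) (S : Set (X → X)) (K : Set X) : Prop :=
  IsClosed K ∧ BicombingConvex σ K ∧ ∀ f ∈ S, MapsTo f K K

theorem isClosedInvariantConvex_sInter {σ : X → X → ℝ → X} {S : Set (X → X)}
    {𝒞 : Set (Set X)} (h : ∀ K ∈ 𝒞, IsClosedInvariantConvex σ S K) :
    IsClosedInvariantConvex σ S (⋂₀ 𝒞) :=
  ⟨isClosed_sInter fun K hK => (h K hK).1,
    fun x hx y hy t ht => mem_sInter.2 fun K hK => (h K hK).2.1 x (hx K hK) y (hy K hK) t ht,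
    fun f hf _ hx => mem_sInter.2 fun K hK => (h K hK).2.2 f hf (hx K hK)⟩

theorem IsClosedInvariantConvex.inter {σ : X → X → ℝ → X} {S : Set (X → X)} {K L : Set X}
    (hK : IsClosedInvariantConvex σ S K) (hL : IsClosedInvariantConvex σ S L) :
    IsClosedInvariantConvex σ S (K ∩ L) := by
  simpa using isClosedInvariantConvex_sInter (𝒞 := {K, L}) (by simp [hK, hL])

theorem isClosedInvariantConvex_setOf_subset_closedBall {σ : X → X → ℝ → X}
    {S : Set (X → X)} {Ω : Set X} (hb : IsGeodesicBicombing σ) (hc : IsConical σ)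
    (hlip : ∀ f ∈ S, LipschitzWith 1 f) (hsurj : ∀ f ∈ S, SurjOn f Ω Ω) (r : ℝ) :
    IsClosedInvariantConvex σ S {w | Ω ⊆ closedBall w r} := by
  refine ⟨?_, ?_, ?_⟩
  · have : {w | Ω ⊆ closedBall w r} = ⋂ z ∈ Ω, closedBall z r := by
      ext w; simp [Set.subset_def, dist_comm]
    rw [this]
    exact isClosed_biInter fun z _ => isClosed_closedBall
  · intro x hx y hy t ht z hz
    have := mem_closedBall'.1 (hx hz)
    have := mem_closedBall'.1 (hy hz)
    have : 0 ≤ 1 - t := sub_nonneg.2 ht.2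
    rw [mem_closedBall']
    calc dist (σ x y t) z ≤ (1 - t) * dist x z + t * dist y z := hc.dist_le hb x y z ht
      _ ≤ (1 - t) * r + t * r := by gcongr; exact ht.1
      _ = r := by ring
  · intro f hf w hw z hz
    obtain ⟨z, hz', rfl⟩ := hsurj f hf hz
    simpa using (hlip f hf).dist_le_mul_of_le (hw hz')

theorem Minimal.subset_closedBall_of_isClosedInvariantConvex {σ : X → X → ℝ → X}
    {S : Set (X → X)} {K Ω : Set X} (hb : IsGeodesicBicombing σ) (hc : IsConical σ)
    (hlip : ∀ f ∈ S, LipschitzWith 1 f) (hsurj : ∀ f ∈ S, SurjOn f Ω Ω)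
    (hK : Minimal (fun K => K.Nonempty ∧ IsClosedInvariantConvex σ S K) K)
    {w : X} (hw : w ∈ K) {r : ℝ} (hwr : Ω ⊆ closedBall w r) {v : X} (hv : v ∈ K) :
    Ω ⊆ closedBall v r :=
  (hK.2 (y := K ∩ {w | Ω ⊆ closedBall w r}) ⟨⟨w, hw, hwr⟩, hK.1.2.inter
    (isClosedInvariantConvex_setOf_subset_closedBall hb hc hlip hsurj r)⟩ inter_subset_left hv).2

theorem Minimal.subsingleton_of_isClosedInvariantConvex {σ : X → X → ℝ → X}
    {S : Set (X → X)} {K Ω : Set X} (hb : IsGeodesicBicombing σ) (hc : IsConical σ)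
    (hlip : ∀ f ∈ S, LipschitzWith 1 f) (hsurj : ∀ f ∈ S, SurjOn f Ω Ω)
    (hK : Minimal (fun K => K.Nonempty ∧ IsClosedInvariantConvex σ S K) K)
    (hΩK : Ω ⊆ K) (hΩ : IsCompact Ω) : Ω.Subsingleton := by
  by_contra hΩ₁
  obtain ⟨x₀, hx₀, -⟩ := not_subsingleton_iff.1 hΩ₁
  have hpos : 0 < diam Ω := diam_pos (not_subsingleton_iff.1 hΩ₁) hΩ.isBounded
  obtain ⟨u, huK, r, hr, hu⟩ := hK.1.2.2.1.exists_subset_closedBall_lt_diam hb hc hΩK hΩ hpos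
  have : diam Ω ≤ r := diam_le_of_forall_dist_le (dist_nonneg.trans (hu hx₀)) fun x hx y hy =>
    mem_closedBall'.1 (hK.subset_closedBall_of_isClosedInvariantConvex hb hc hlip hsurj huK hu
      (hΩK hx) hy)
  linarith

end MetricSpace

end

/-- **Proposition 4.3 (Kijima).** Let `X` be a nonempty compact metric space with a conical
geodesic bicombing and let `S` be a nonempty left reversible semigroup of `1`-Lipschitz
self-maps of `X`. Then `S` has a common fixed point. -/
theorem common_fixed_point_of_left_reversible_semigroup
    {X : Type*} [MetricSpace X] [CompactSpace X] [Nonempty X]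
    (hbic : ∃ σ : X → X → ℝ → X, IsGeodesicBicombing σ ∧ IsConical σ)
    (S : Set (X → X)) (hne : S.Nonempty)
    (hlip : ∀ f ∈ S, LipschitzWith 1 f)
    (hcomp : ∀ f ∈ S, ∀ g ∈ S, f ∘ g ∈ S)
    (hrev : ∀ a ∈ S, ∀ b ∈ S, ∃ c ∈ S, ∃ d ∈ S, a ∘ c = b ∘ d) :
    ∃ x : X, ∀ f ∈ S, f x = x := by
  obtain ⟨σ, hb, hc⟩ := hbic
  have hcont : ∀ f ∈ S, Continuous f := fun f hf => (hlip f hf).continuous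
  obtain ⟨K, hK⟩ := exists_minimal_nonempty_of_forall_sInter
    (fun _ => isClosedInvariantConvex_sInter (σ := σ) (S := S)) fun _ h => h.1
  obtain ⟨hKne, hKcl, -, hKS⟩ := hK.1
  set Ω := ⋂ a ∈ S, a '' K
  obtain ⟨x, hx⟩ : Ω.Nonempty :=
    nonempty_biInter_image_of_leftReversible hne hcont hcomp hrev hKS hKcl hKne
  have hΩK : Ω ⊆ K :=
    let ⟨f, hf⟩ := hne; (biInter_subset_of_mem hf).trans (hKS f hf).image_subset
  have hΩ : IsCompact Ω :=
    (isClosed_biInter fun a ha => (hKcl.isCompact.image (hcont a ha)).isClosed).isCompact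
  have hΩ₁ : Ω.Subsingleton := hK.subsingleton_of_isClosedInvariantConvex hb hc hlip
    (fun f hf => surjOn_biInter_image_of_leftReversible hcont hcomp hrev hKS hKcl hf) hΩK hΩ
  exact ⟨x, fun f hf => hΩ₁ (mapsTo_biInter_image_of_leftReversible hrev hKS hf hx) hx⟩
end

section
/- Let (X,d) be a nonempty compact metric space admitting a conical geodesic bicombing. Then X admits a reversible conical geodesic bicombing σ that is Iso(X)-equivariant, i.e. f(σ(x,y,t)) = σ(f(x), f(y), t) for every surjective isometry f : X → X, all x, y ∈ X, and all t ∈ [0,1]. -/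
/-!
Restricted to `X × X × [0,1]`, conical bicombings form a compact set `K` of bounded continuous
maps (Arzelà–Ascoli). On `K` the operation `f ⋆ g = f (f, g, 1/2)` satisfies
`d(f ⋆ g, ρ) ≤ (d(f, ρ) + d(g, ρ)) / 2`, while reversal and conjugation by isometries of `X` act
isometrically. By Zorn there is a minimal nonempty closed subset `S ⊆ K` stable under all these
operations, and it is a point: averaging a finite net of `S` by iterated `⋆` gives a point of `S`
whose distance to all of `S` is `r < diam S`, and the points with this property form a smaller
stable set. That point is the required bicombing.
-/

section MidpointFixedPoint

open Set Metric

variable {α : Type*}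

lemma foldr_mem {m : α → α → α} {S : Set α} (hmS : ∀ f ∈ S, ∀ g ∈ S, m f g ∈ S) {a : α}
    (ha : a ∈ S) :
    ∀ {l : List α}, (∀ f ∈ l, f ∈ S) → l.foldr m a ∈ S
  | [], _ => ha
  | _ :: _, hl => hmS _ (hl _ (List.mem_cons_self ..))
      _ (foldr_mem hmS ha fun f hf => hl f (List.mem_cons_of_mem _ hf))

variable [MetricSpace α]

structure IsStableSet (m : α → α → α) (Φ : Set (α ≃ᵢ α)) (S : Set α) : Prop where
  nonempty : S.Nonempty
  isClosed : IsClosed S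
  mid_mem : ∀ f ∈ S, ∀ g ∈ S, m f g ∈ S
  mapsTo : ∀ φ ∈ Φ, MapsTo φ S S

variable {m : α → α → α} {Φ : Set (α ≃ᵢ α)}

/-- Iterated midpoints `f₁ ⋆ (f₂ ⋆ (⋯ ⋆ a))` give every `fᵢ` weight at least `2⁻ⁿ`. -/
lemma dist_foldr_le {S : Set α} (hmS : ∀ f ∈ S, ∀ g ∈ S, m f g ∈ S) {ρ : α} {R : ℝ}
    (hm : ∀ f ∈ S, ∀ g ∈ S, dist (m f g) ρ ≤ (dist f ρ + dist g ρ) / 2)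
    (hR : ∀ f ∈ S, dist f ρ ≤ R) {a : α} (ha : a ∈ S) :
    ∀ {l : List α}, (∀ f ∈ l, f ∈ S) → ∀ b ∈ l,
      dist (l.foldr m a) ρ ≤ R - (R - dist b ρ) / 2 ^ l.length
  | [], _, b, hb => absurd hb List.not_mem_nil
  | f :: l, hl, b, hb => by
    have hlS : ∀ g ∈ l, g ∈ S := fun g hg => hl g (List.mem_cons_of_mem _ hg)
    have hfS : f ∈ S := hl f (List.mem_cons_self ..)
    have hrest : l.foldr m a ∈ S := foldr_mem hmS ha hlS
    have hb_le : dist b ρ ≤ R := hR b (hl b hb)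
    have hpow : (1 : ℝ) ≤ 2 ^ l.length := one_le_pow₀ one_le_two
    rw [List.foldr_cons, List.length_cons, pow_succ]
    refine (hm f hfS _ hrest).trans ?_
    rcases List.mem_cons.1 hb with rfl | hbl
    · have : (R - dist b ρ) / (2 ^ l.length * 2) ≤ (R - dist b ρ) / 2 :=
        div_le_div_of_nonneg_left (by linarith) two_pos (by linarith)
      linarith [hR _ hrest]
    · have := dist_foldr_le hmS hm hR ha hlS b hbl
      have : (R - dist b ρ) / (2 ^ l.length * 2) = (R - dist b ρ) / 2 ^ l.length / 2 := by
        rw [div_div]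
      linarith [hR f hfS]

lemma IsCompact.exists_forall_dist_le_lt {S : Set α} (hS : IsCompact S) (hne : S.Nonempty)
    (hmS : ∀ f ∈ S, ∀ g ∈ S, m f g ∈ S)
    (hm : ∀ f ∈ S, ∀ g ∈ S, ∀ ρ ∈ S, dist (m f g) ρ ≤ (dist f ρ + dist g ρ) / 2)
    {R : ℝ} (hR : 0 < R) (hdist : ∀ f ∈ S, ∀ ρ ∈ S, dist f ρ ≤ R) :
    ∃ c ∈ S, ∃ r < R, ∀ ρ ∈ S, dist c ρ ≤ r := by
  obtain ⟨a, ha⟩ := hne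
  obtain ⟨t, htS, htfin, hcover⟩ := hS.finite_cover_balls (half_pos hR)
  set l := htfin.toFinset.toList
  have hlS : ∀ f ∈ l, f ∈ S := fun f hf => htS (by simpa [l] using hf)
  refine ⟨l.foldr m a, foldr_mem hmS ha hlS, R - R / 2 / 2 ^ l.length,
    sub_lt_self R (by positivity), fun ρ hρ => ?_⟩
  obtain ⟨b, hbt, hbρ⟩ := mem_iUnion₂.1 (hcover hρ)
  have hb : b ∈ l := by simpa [l] using hbt
  have := dist_foldr_le hmS (fun f hf g hg => hm f hf g hg ρ hρ) (fun f hf => hdist f hf ρ hρ)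
    ha hlS b hb
  have : R / 2 / 2 ^ l.length ≤ (R - dist b ρ) / 2 ^ l.length := by
    gcongr
    linarith [mem_ball'.1 hbρ]
  linarith

lemma exists_minimal_isStableSet {K : Set α} (hK : IsCompact K) (hKs : IsStableSet m Φ K) :
    ∃ S, Minimal (fun S => S ⊆ K ∧ IsStableSet m Φ S) S := by
  suffices hchain : ∀ c ⊆ {S | S ⊆ K ∧ IsStableSet m Φ S}, IsChain (· ⊆ ·) c → c.Nonempty →
      ∃ T ∈ {S | S ⊆ K ∧ IsStableSet m Φ S}, ∀ S ∈ c, T ⊆ S by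
    obtain ⟨S, -, hS⟩ := zorn_superset_nonempty _ hchain K ⟨subset_rfl, hKs⟩
    exact ⟨S, hS⟩
  rintro c hc hchain ⟨S₀, hS₀⟩
  refine ⟨⋂₀ c, ⟨(sInter_subset_of_mem hS₀).trans (hc hS₀).1, ⟨?_, ?_, ?_, ?_⟩⟩,
    fun S hS => sInter_subset_of_mem hS⟩
  · have : Nonempty c := ⟨⟨S₀, hS₀⟩⟩
    exact IsCompact.nonempty_sInter_of_directed_nonempty_isCompact_isClosed
      (fun i hi j hj => (hchain.total hi hj).elim (fun h => ⟨i, hi, subset_rfl, h⟩)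
        fun h => ⟨j, hj, h, subset_rfl⟩)
      (fun S hS => (hc hS).2.nonempty)
      (fun S hS => hK.of_isClosed_subset (hc hS).2.isClosed (hc hS).1)
      (fun S hS => (hc hS).2.isClosed)
  · exact isClosed_sInter fun S hS => (hc hS).2.isClosed
  · exact fun f hf g hg S hS => (hc hS).2.mid_mem f (hf S hS) g (hg S hS)
  · exact fun φ hφ f hf S hS => (hc hS).2.mapsTo φ hφ (hf S hS)

lemma Minimal.subsingleton_of_isStableSet {K : Set α} (hK : IsCompact K)
    (hm : ∀ f ∈ K, ∀ g ∈ K, ∀ ρ ∈ K, dist (m f g) ρ ≤ (dist f ρ + dist g ρ) / 2)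
    (hΦ : ∀ φ ∈ Φ, φ.symm ∈ Φ) {S : Set α}
    (hS : Minimal (fun S => S ⊆ K ∧ IsStableSet m Φ S) S) : S.Subsingleton := by
  obtain ⟨hSK, hSs⟩ := hS.prop
  have hSc : IsCompact S := hK.of_isClosed_subset hSs.isClosed hSK
  intro x hx y hy
  by_contra hxy
  have hdiam : 0 < diam S := (dist_pos.2 hxy).trans_le (dist_le_diam_of_mem hSc.isBounded hx hy)
  obtain ⟨c, hc, r, hr, hcr⟩ := hSc.exists_forall_dist_le_lt hSs.nonempty hSs.mid_mem
    (fun f hf g hg ρ hρ => hm f (hSK hf) g (hSK hg) ρ (hSK hρ)) hdiam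
    (fun f hf ρ hρ => dist_le_diam_of_mem hSc.isBounded hf hρ)
  set T := S ∩ ⋂ ρ ∈ S, closedBall ρ r
  have hTS : T ⊆ S := inter_subset_left
  have hT : IsStableSet m Φ T := by
    refine ⟨⟨c, hc, mem_iInter₂.2 fun ρ hρ => hcr ρ hρ⟩,
      hSs.isClosed.inter (isClosed_biInter fun ρ _ => isClosed_closedBall), ?_, ?_⟩
    · rintro f ⟨hf, hfr⟩ g ⟨hg, hgr⟩
      refine ⟨hSs.mid_mem f hf g hg, mem_iInter₂.2 fun ρ hρ => ?_⟩
      have := hm f (hSK hf) g (hSK hg) ρ (hSK hρ)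
      have := mem_closedBall.1 (mem_iInter₂.1 hfr ρ hρ)
      have := mem_closedBall.1 (mem_iInter₂.1 hgr ρ hρ)
      exact mem_closedBall.2 (by linarith)
    · rintro φ hφ f ⟨hf, hfr⟩
      refine ⟨hSs.mapsTo φ hφ hf, mem_iInter₂.2 fun ρ hρ => ?_⟩
      rw [mem_closedBall, ← φ.apply_symm_apply ρ, φ.dist_eq]
      exact mem_iInter₂.1 hfr _ (hSs.mapsTo _ (hΦ φ hφ) hρ)
  have hST : S ⊆ T := hS.le_of_le ⟨hTS.trans hSK, hT⟩ hTS
  have : diam S ≤ r := diam_le_of_forall_dist_le ((dist_nonneg).trans (hcr c hc))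
    fun f hf ρ hρ => mem_closedBall.1 (mem_iInter₂.1 (hST hf).2 ρ hρ)
  linarith

theorem exists_common_fixedPoint_of_isStableSet {K : Set α} (hK : IsCompact K)
    (hKs : IsStableSet m Φ K)
    (hm : ∀ f ∈ K, ∀ g ∈ K, ∀ ρ ∈ K, dist (m f g) ρ ≤ (dist f ρ + dist g ρ) / 2)
    (hΦ : ∀ φ ∈ Φ, φ.symm ∈ Φ) : ∃ c ∈ K, ∀ φ ∈ Φ, φ c = c := by
  obtain ⟨S, hS⟩ := exists_minimal_isStableSet hK hKs
  obtain ⟨c, hc⟩ := hS.prop.2.nonempty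
  exact ⟨c, hS.prop.1 hc, fun φ hφ =>
    Minimal.subsingleton_of_isStableSet hK hm hΦ hS (hS.prop.2.mapsTo φ hφ hc) hc⟩

end MidpointFixedPoint

namespace BoundedContinuousFunction

variable {α β γ δ : Type*} [TopologicalSpace α] [TopologicalSpace δ] [PseudoMetricSpace β]
  [PseudoMetricSpace γ]

lemma dist_compContinuous_of_surjective {φ : C(δ, α)} (hφ : Function.Surjective φ)
    (f₁ f₂ : α →ᵇ β) : dist (f₁.compContinuous φ) (f₂.compContinuous φ) = dist f₁ f₂ := by
  refine ((lipschitz_compContinuous φ).dist_le_mul f₁ f₂).trans_eq (one_mul _) |>.antisymm ?_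
  refine (dist_le dist_nonneg).2 fun x => ?_
  obtain ⟨y, rfl⟩ := hφ x
  exact dist_coe_le_dist (f := f₁.compContinuous φ) (g := f₂.compContinuous φ) y

lemma dist_comp_of_isometry {G : β → γ} (hG : Isometry G) {C : NNReal} (hGC : LipschitzWith C G)
    (f₁ f₂ : α →ᵇ β) : dist (f₁.comp G hGC) (f₂.comp G hGC) = dist f₁ f₂ := by
  refine le_antisymm ((dist_le dist_nonneg).2 fun x => ?_) ((dist_le dist_nonneg).2 fun x => ?_)
  · rw [comp_apply, comp_apply, hG.dist_eq]
    exact dist_coe_le_dist x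
  · rw [← hG.dist_eq]
    exact dist_coe_le_dist (f := f₁.comp G hGC) (g := f₂.comp G hGC) x

end BoundedContinuousFunction

noncomputable section

open Set Metric unitInterval
open scoped BoundedContinuousFunction

variable {X : Type*} [MetricSpace X]

structure IsConicalCombing (f : X × X × I → X) : Prop where
  apply_zero : ∀ x y, f (x, y, 0) = x
  apply_one : ∀ x y, f (x, y, 1) = y
  dist_le : ∀ x y (s t : I), dist (f (x, y, s)) (f (x, y, t)) ≤ |(s : ℝ) - t| * dist x y
  conical : ∀ x y x' y' (t : I),
    dist (f (x, y, t)) (f (x', y', t)) ≤ (1 - t) * dist x x' + t * dist y y'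

namespace IsConicalCombing

variable {f : X × X × I → X}

lemma apply_self (hf : IsConicalCombing f) (x : X) (t : I) : f (x, x, t) = x := by
  simpa [hf.apply_zero] using hf.dist_le x x t 0

/-- The triangle inequality through the endpoints turns the Lipschitz bound into equality. -/
lemma dist_eq (hf : IsConicalCombing f) (x y : X) (s t : I) :
    dist (f (x, y, s)) (f (x, y, t)) = |(s : ℝ) - t| * dist x y := by
  wlog hst : (s : ℝ) ≤ t generalizing s t
  · rw [dist_comm, abs_sub_comm]
    exact this t s (le_of_not_ge hst)
  refine (hf.dist_le x y s t).antisymm ?_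
  have h₀ := hf.dist_le x y 0 s
  have h₁ := hf.dist_le x y t 1
  rw [hf.apply_zero] at h₀
  rw [hf.apply_one] at h₁
  simp only [Icc.coe_zero, Icc.coe_one, zero_sub, abs_neg, abs_of_nonneg s.2.1,
    abs_of_nonpos (sub_nonpos.2 t.2.2), abs_of_nonpos (sub_nonpos.2 hst)] at h₀ h₁ ⊢
  linarith [dist_triangle4 x (f (x, y, s)) (f (x, y, t)) y]

lemma lipschitzWith [BoundedSpace X] (hf : IsConicalCombing f) :
    LipschitzWith (diam (univ : Set X) + 1).toNNReal f := by
  refine LipschitzWith.of_dist_le' fun ⟨x, y, s⟩ ⟨x', y', t⟩ => ?_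
  set d := dist (x, y, s) (x', y', t)
  have hx : dist x x' ≤ d := by simp [d, Prod.dist_eq]
  have hy : dist y y' ≤ d := by simp [d, Prod.dist_eq]
  have hst : |(s : ℝ) - t| ≤ d := by simp [d, Prod.dist_eq, Subtype.dist_eq, Real.dist_eq]
  have hxy : dist x y ≤ diam (univ : Set X) :=
    dist_le_diam_of_mem BoundedSpace.bounded_univ (mem_univ x) (mem_univ y)
  calc dist (f (x, y, s)) (f (x', y', t))
      ≤ dist (f (x, y, s)) (f (x, y, t)) + dist (f (x, y, t)) (f (x', y', t)) :=
        dist_triangle _ _ _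
    _ ≤ |(s : ℝ) - t| * dist x y + ((1 - t) * dist x x' + t * dist y y') :=
        add_le_add (hf.dist_le x y s t) (hf.conical x y x' y' t)
    _ ≤ d * diam (univ : Set X) + ((1 - t) * d + t * d) := by
        have := t.2.1; have := t.2.2
        gcongr
    _ = (diam (univ : Set X) + 1) * d := by ring

end IsConicalCombing

namespace Bicombing

def half : I := ⟨1 / 2, by norm_num, by norm_num⟩

def mid (f g : X × X × I →ᵇ X) : X × X × I →ᵇ X :=
  f.compContinuous ⟨fun p => (f p, g p, half), by fun_prop⟩

def flipParams : C(X × X × I, X × X × I) := ⟨fun p => (p.2.1, p.1, σ p.2.2), by fun_prop⟩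

lemma flipParams_involutive : Function.Involutive (flipParams (X := X)) := fun p => by
  simp [flipParams]

def reverse : (X × X × I →ᵇ X) ≃ᵢ (X × X × I →ᵇ X) :=
  IsometryEquiv.mk' (·.compContinuous flipParams) (·.compContinuous flipParams)
    (fun f => by ext p; simp [flipParams_involutive p])
    (Isometry.of_dist_eq <| BoundedContinuousFunction.dist_compContinuous_of_surjective
      flipParams_involutive.surjective)

def conjFun (e : X ≃ᵢ X) (f : X × X × I →ᵇ X) : X × X × I →ᵇ X :=
  (f.compContinuous ⟨fun p => (e.symm p.1, e.symm p.2.1, p.2.2), by fun_prop⟩).comp e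
    e.isometry.lipschitz

def conj (e : X ≃ᵢ X) : (X × X × I →ᵇ X) ≃ᵢ (X × X × I →ᵇ X) :=
  IsometryEquiv.mk' (conjFun e) (conjFun e.symm) (fun f => by ext p; simp [conjFun])
    (Isometry.of_dist_eq fun f₁ f₂ => by
      rw [conjFun, conjFun, BoundedContinuousFunction.dist_comp_of_isometry e.isometry,
        BoundedContinuousFunction.dist_compContinuous_of_surjective]
      exact fun p => ⟨(e p.1, e p.2.1, p.2.2), by simp⟩)

@[simp] lemma mid_apply (f g : X × X × I →ᵇ X) (p : X × X × I) :
    mid f g p = f (f p, g p, half) :=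
  rfl

@[simp] lemma reverse_apply (f : X × X × I →ᵇ X) (x y : X) (t : I) :
    reverse f (x, y, t) = f (y, x, σ t) :=
  rfl

@[simp] lemma conj_apply (e : X ≃ᵢ X) (f : X × X × I →ᵇ X) (x y : X) (t : I) :
    conj e f (x, y, t) = e (f (e.symm x, e.symm y, t)) :=
  rfl

lemma reverse_symm : (reverse : (X × X × I →ᵇ X) ≃ᵢ _).symm = reverse := rfl

lemma conj_symm (e : X ≃ᵢ X) : (conj e).symm = conj e.symm := rfl

def symmetries : Set ((X × X × I →ᵇ X) ≃ᵢ (X × X × I →ᵇ X)) := insert reverse (range conj)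

lemma symm_mem_symmetries {φ : (X × X × I →ᵇ X) ≃ᵢ (X × X × I →ᵇ X)} (hφ : φ ∈ symmetries) :
    φ.symm ∈ symmetries := by
  rcases hφ with rfl | ⟨e, rfl⟩
  · rw [reverse_symm]
    exact mem_insert _ _
  · rw [conj_symm]
    exact mem_insert_of_mem _ ⟨e.symm, rfl⟩

end Bicombing

open Bicombing

namespace IsConicalCombing

variable {f g : X × X × I →ᵇ X}

lemma mid (hf : IsConicalCombing f) (hg : IsConicalCombing g) :
    IsConicalCombing (Bicombing.mid f g) where
  apply_zero x y := by simp [hf.apply_zero, hg.apply_zero, hf.apply_self]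
  apply_one x y := by simp [hf.apply_one, hg.apply_one, hf.apply_self]
  dist_le x y s t := by
    have := hf.conical (f (x, y, s)) (g (x, y, s)) (f (x, y, t)) (g (x, y, t)) half
    have := hf.dist_le x y s t
    have := hg.dist_le x y s t
    simp only [mid_apply, half] at *
    linarith
  conical x y x' y' t := by
    have := hf.conical (f (x, y, t)) (g (x, y, t)) (f (x', y', t)) (g (x', y', t)) half
    have := hf.conical x y x' y' t
    have := hg.conical x y x' y' t
    simp only [mid_apply, half] at *
    linarith

lemma dist_mid_le (hf : IsConicalCombing f) (g ρ : X × X × I →ᵇ X) :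
    dist (Bicombing.mid f g) ρ ≤ (dist f ρ + dist g ρ) / 2 := by
  refine (BoundedContinuousFunction.dist_le (by positivity)).2 fun p => ?_
  have := hf.conical (f p) (g p) (ρ p) (ρ p) half
  rw [hf.apply_self] at this
  simp only [mid_apply, half] at *
  linarith [BoundedContinuousFunction.dist_coe_le_dist (f := f) (g := ρ) p,
    BoundedContinuousFunction.dist_coe_le_dist (f := g) (g := ρ) p]

lemma reverse (hf : IsConicalCombing f) : IsConicalCombing (Bicombing.reverse f) where
  apply_zero x y := by simp [hf.apply_one]
  apply_one x y := by simp [hf.apply_zero]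
  dist_le x y s t := by
    simpa [dist_comm y x, abs_sub_comm] using hf.dist_le y x (σ s) (σ t)
  conical x y x' y' t := by
    simpa [add_comm] using hf.conical y x y' x' (σ t)

lemma conj (hf : IsConicalCombing f) (e : X ≃ᵢ X) : IsConicalCombing (Bicombing.conj e f) where
  apply_zero x y := by simp [hf.apply_zero]
  apply_one x y := by simp [hf.apply_one]
  dist_le x y s t := by
    simpa [e.dist_eq, e.symm.dist_eq] using hf.dist_le (e.symm x) (e.symm y) s t
  conical x y x' y' t := by
    simpa [e.dist_eq, e.symm.dist_eq] using
      hf.conical (e.symm x) (e.symm y) (e.symm x') (e.symm y') t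

end IsConicalCombing

lemma isClosed_setOf_isConicalCombing :
    IsClosed {f : X × X × I →ᵇ X | IsConicalCombing f} := by
  have h : {f : X × X × I →ᵇ X | IsConicalCombing f} =
      {f | ∀ x y, f (x, y, 0) = x} ∩ {f | ∀ x y, f (x, y, 1) = y} ∩
      {f | ∀ x y (s t : I), dist (f (x, y, s)) (f (x, y, t)) ≤ |(s : ℝ) - t| * dist x y} ∩
      {f | ∀ x y x' y' (t : I),
        dist (f (x, y, t)) (f (x', y', t)) ≤ (1 - t) * dist x x' + t * dist y y'} := by
    ext f
    exact ⟨fun ⟨a, b, c, d⟩ => ⟨⟨⟨a, b⟩, c⟩, d⟩, fun ⟨⟨⟨a, b⟩, c⟩, d⟩ => ⟨a, b, c, d⟩⟩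
  simp only [h, ofPred_forall]
  refine .inter (.inter (.inter ?_ ?_) ?_) ?_ <;> repeat refine isClosed_iInter fun _ => ?_
  · exact isClosed_eq (continuous_eval_const _) continuous_const
  · exact isClosed_eq (continuous_eval_const _) continuous_const
  · exact isClosed_le (by fun_prop) continuous_const
  · exact isClosed_le (by fun_prop) continuous_const

lemma isCompact_setOf_isConicalCombing [CompactSpace X] :
    IsCompact {f : X × X × I →ᵇ X | IsConicalCombing f} :=
  BoundedContinuousFunction.arzela_ascoli₂ univ isCompact_univ _ isClosed_setOf_isConicalCombing
    (fun _ _ _ => mem_univ _)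
    (LipschitzWith.uniformEquicontinuous _ _ fun f => f.2.lipschitzWith).equicontinuous

lemma IsGeodesicBicombing.isConicalCombing {b : X → X → ℝ → X} (hb : IsGeodesicBicombing b)
    (hbc : IsConical b) : IsConicalCombing fun p : X × X × I => b p.1 p.2.1 p.2.2 where
  apply_zero := hb.1
  apply_one := hb.2.1
  dist_le x y s t := (hb.2.2 x y s s.2 t t.2).le
  conical x y x' y' t := hbc x y x' y' t t.2

lemma exists_isConicalCombing [CompactSpace X]
    {b : X → X → ℝ → X} (hb : IsGeodesicBicombing b) (hbc : IsConical b) :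
    ∃ f : X × X × I →ᵇ X, IsConicalCombing f := by
  have hf := hb.isConicalCombing hbc
  exact ⟨.mkOfCompact ⟨_, hf.lipschitzWith.continuous⟩, hf⟩

lemma isStableSet_setOf_isConicalCombing [CompactSpace X]
    {b : X → X → ℝ → X} (hb : IsGeodesicBicombing b) (hbc : IsConical b) :
    IsStableSet Bicombing.mid symmetries {f : X × X × I →ᵇ X | IsConicalCombing f} where
  nonempty := exists_isConicalCombing hb hbc
  isClosed := isClosed_setOf_isConicalCombing
  mid_mem _ hf _ hg := hf.mid hg
  mapsTo := by
    rintro φ (rfl | ⟨e, rfl⟩) f hf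
    exacts [hf.reverse, hf.conj e]

namespace IsConicalCombing

variable {f : X × X × I → X}

lemma isGeodesicBicombing_iccExtend (hf : IsConicalCombing f) :
    IsGeodesicBicombing fun x y => IccExtend zero_le_one fun t => f (x, y, t) := by
  refine ⟨fun x y => ?_, fun x y => ?_, fun x y s hs t ht => ?_⟩
  · simpa using hf.apply_zero x y
  · simpa using hf.apply_one x y
  · simpa [IccExtend_of_mem _ _ hs, IccExtend_of_mem _ _ ht] using
      hf.dist_eq x y ⟨s, hs⟩ ⟨t, ht⟩

lemma isConical_iccExtend (hf : IsConicalCombing f) :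
    IsConical fun x y => IccExtend zero_le_one fun t => f (x, y, t) := fun x y x' y' t ht => by
  simpa [IccExtend_of_mem _ _ ht] using hf.conical x y x' y' ⟨t, ht⟩

end IsConicalCombing

lemma isReversible_iccExtend_of_reverse_eq {f : X × X × I →ᵇ X} (h : reverse f = f) :
    IsReversible fun x y => IccExtend zero_le_one fun t => f (x, y, t) := fun x y t ht => by
  conv_lhs => rw [← h]
  simp only [reverse_apply, IccExtend_of_mem _ _ ht,
    IccExtend_of_mem _ _ (Icc.mem_iff_one_sub_mem.1 ht)]
  rfl

lemma apply_iccExtend_of_conj_eq {f : X × X × I →ᵇ X} {e : X ≃ᵢ X} (h : conj e f = f)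
    (x y : X) (t : ℝ) :
    e (IccExtend zero_le_one (fun t => f (x, y, t)) t) =
      IccExtend zero_le_one (fun t => f (e x, e y, t)) t := by
  conv_rhs => rw [← h]
  simp [IccExtend]

end

theorem compact_exists_isometry_equivariant_reversible_conical_bicombing_general
    {X : Type*} [MetricSpace X] [CompactSpace X]
    (h : ∃ σ : X → X → ℝ → X, IsGeodesicBicombing σ ∧ IsConical σ) :
    ∃ σ : X → X → ℝ → X, IsGeodesicBicombing σ ∧ IsConical σ ∧ IsReversible σ ∧
      ∀ f : X → X, Isometry f → Function.Surjective f →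
        ∀ x y : X, ∀ t ∈ Set.Icc (0:ℝ) 1, f (σ x y t) = σ (f x) (f y) t := by
  obtain ⟨b, hb, hbc⟩ := h
  obtain ⟨c, hc, hfix⟩ := exists_common_fixedPoint_of_isStableSet
    isCompact_setOf_isConicalCombing (isStableSet_setOf_isConicalCombing hb hbc)
    (fun f hf g _ ρ _ => IsConicalCombing.dist_mid_le hf g ρ) fun _ => Bicombing.symm_mem_symmetries
  refine ⟨_, IsConicalCombing.isGeodesicBicombing_iccExtend hc,
    IsConicalCombing.isConical_iccExtend hc,
    isReversible_iccExtend_of_reverse_eq (hfix _ (Set.mem_insert _ _)), fun g hg hgs x y t _ => ?_⟩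
  exact apply_iccExtend_of_conj_eq (e := .mk' g _ (Function.surjInv_eq hgs) hg)
    (hfix _ (Set.mem_insert_of_mem _ ⟨_, rfl⟩)) x y t

/-- **Lemma 4.5.** Every nonempty compact metric space admitting a conical geodesic bicombing
admits an `Iso(X)`-equivariant reversible conical geodesic bicombing. -/
theorem compact_exists_isometry_equivariant_reversible_conical_bicombing
    {X : Type*} [MetricSpace X] [CompactSpace X] [Nonempty X]
    (h : ∃ σ : X → X → ℝ → X, IsGeodesicBicombing σ ∧ IsConical σ) :
    ∃ σ : X → X → ℝ → X, IsGeodesicBicombing σ ∧ IsConical σ ∧ IsReversible σ ∧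
      ∀ f : X → X, Isometry f → Function.Surjective f →
        ∀ x y : X, ∀ t ∈ Set.Icc (0:ℝ) 1, f (σ x y t) = σ (f x) (f y) t :=
  compact_exists_isometry_equivariant_reversible_conical_bicombing_general h
end
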